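/- arXiv:1710.11033 — 6 statements merged into one kernel-verified Lean document; each statement's English description precedes it below -/
import Mathlib

section
/- For any finite set I of positive integers, the function n ↦ d(I;n) agrees with a polynomial in n of degree exactly m = max(I ∪ {0}) for all n > m. -/
/-- The descent set of a permutation of `Fin n`, with positions 1-indexed:
`i ∈ descSet n π` iff `1 ≤ i ≤ n-1` and `π_i > π_{i+1}` (1-indexed entries). -/
def descSet (n : ℕ) (π : Equiv.Perm (Fin n)) : Finset ℕ :=
  (Finset.range n).filter fun i =>
    ∃ h : 0 < i ∧ i < n, π ⟨i, h.2⟩ < π ⟨i - 1, by omega⟩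

/-- `dA I n` is the number of permutations in `S_n` with descent set exactly `I`. -/
def dA (I : Finset ℕ) (n : ℕ) : ℕ :=
  (Finset.univ.filter fun π : Equiv.Perm (Fin n) => descSet n π = I).card

lemma mem_descSet {n i : ℕ} {π : Equiv.Perm (Fin n)} (h0 : 0 < i) (h1 : i < n) :
    i ∈ descSet n π ↔ π ⟨i, h1⟩ < π ⟨i - 1, by omega⟩ := by
  simp only [descSet, Finset.mem_filter, Finset.mem_range]
  constructor
  · rintro ⟨-, ⟨h, hlt⟩⟩; exact hlt
  · intro h; exact ⟨h1, ⟨⟨h0, h1⟩, h⟩⟩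

lemma pos_of_mem_descSet {n i : ℕ} {π : Equiv.Perm (Fin n)} (h : i ∈ descSet n π) :
    0 < i ∧ i < n := by
  simp only [descSet, Finset.mem_filter, Finset.mem_range] at h
  obtain ⟨-, hh, -⟩ := h; exact hh

lemma step_asc {n i : ℕ} {π : Equiv.Perm (Fin n)} (h0 : 0 < i) (h1 : i < n)
    (hnd : i ∉ descSet n π) : π ⟨i - 1, by omega⟩ < π ⟨i, h1⟩ := by
  rw [mem_descSet h0 h1] at hnd
  rcases lt_or_eq_of_le (not_lt.mp hnd) with h | h
  · exact h
  · exfalso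
    have h2 := π.injective h
    have h3 := congrArg Fin.val h2
    simp at h3; omega

lemma step_asc' {n i : ℕ} {π : Equiv.Perm (Fin n)} (h1 : i + 1 < n)
    (hnd : i + 1 ∉ descSet n π) : π ⟨i, by omega⟩ < π ⟨i + 1, h1⟩ := by
  have := step_asc (i := i + 1) (by omega) h1 hnd
  simpa using this

lemma chain_asc {n : ℕ} {π : Equiv.Perm (Fin n)} :
    ∀ (d a : ℕ) (h : a + d + 1 < n), (∀ i, a < i → i ≤ a + d + 1 → i ∉ descSet n π) →
      π ⟨a, by omega⟩ < π ⟨a + d + 1, h⟩ := by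
  intro d
  induction d with
  | zero =>
      intro a h hnd
      exact step_asc' h (hnd (a+1) (by omega) (by omega))
  | succ d ih =>
      intro a h hnd
      have h1 := ih a (by omega) (fun i hi hi' => hnd i hi (by omega))
      have h2 := step_asc' (i := a + d + 1) (by omega)
        (hnd (a + d + 1 + 1) (by omega) (by omega))
      exact lt_trans h1 h2

lemma asc_of_no_desc {n : ℕ} {π : Equiv.Perm (Fin n)} {a b : Fin n} (hab : a < b)
    (h : ∀ i : ℕ, (a : ℕ) < i → i ≤ (b : ℕ) → i ∉ descSet n π) : π a < π b := by
  have hb : (b : ℕ) = (a : ℕ) + ((b : ℕ) - (a : ℕ) - 1) + 1 := by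
    have := Fin.lt_def.mp hab; omega
  have := chain_asc ((b : ℕ) - (a : ℕ) - 1) (a : ℕ) (by omega)
    (fun i hi hi' => h i hi (by omega))
  convert this using 2 <;> (apply Fin.ext; simp; omega)


variable {n j : ℕ}

def aA (I : Finset ℕ) (n : ℕ) : ℕ :=
  (Finset.univ.filter fun π : Equiv.Perm (Fin n) => descSet n π ⊆ I).card

lemma complCard (hjn : j ≤ n) (S : Finset (Fin n)) (hS : S.card = j) : Sᶜ.card = n - j := by
  rw [Finset.card_compl, hS, Fintype.card_fin]

noncomputable def buildFun (hjn : j ≤ n) (S : Finset (Fin n)) (hS : S.card = j)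
    (σ : Equiv.Perm (Fin j)) : Fin n → Fin n := fun i =>
  if h : (i : ℕ) < j then S.orderEmbOfFin hS (σ ⟨i, h⟩)
  else Sᶜ.orderEmbOfFin (complCard hjn S hS) ⟨(i : ℕ) - j, by omega⟩

lemma buildFun_inj (hjn : j ≤ n) (S : Finset (Fin n)) (hS : S.card = j)
    (σ : Equiv.Perm (Fin j)) : Function.Injective (buildFun hjn S hS σ) := by
  intro a b hab
  unfold buildFun at hab
  split_ifs at hab with h1 h2 h2
  · have h3 := σ.injective ((S.orderEmbOfFin hS).injective hab)
    exact Fin.ext (by simpa using h3)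
  · exfalso
    have hm1 : S.orderEmbOfFin hS (σ ⟨a, h1⟩) ∈ S := Finset.orderEmbOfFin_mem _ _ _
    have hm2 : Sᶜ.orderEmbOfFin (complCard hjn S hS) ⟨(b:ℕ) - j, by omega⟩ ∈ Sᶜ :=
      Finset.orderEmbOfFin_mem _ _ _
    rw [hab] at hm1
    exact (Finset.mem_compl.mp hm2) hm1
  · exfalso
    have hm1 : S.orderEmbOfFin hS (σ ⟨b, h2⟩) ∈ S := Finset.orderEmbOfFin_mem _ _ _
    have hm2 : Sᶜ.orderEmbOfFin (complCard hjn S hS) ⟨(a:ℕ) - j, by omega⟩ ∈ Sᶜ :=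
      Finset.orderEmbOfFin_mem _ _ _
    rw [← hab] at hm1
    exact (Finset.mem_compl.mp hm2) hm1
  · have := (Sᶜ.orderEmbOfFin (complCard hjn S hS)).injective hab
    have : (a:ℕ) - j = (b:ℕ) - j := congrArg Fin.val this
    exact Fin.ext (by omega)

noncomputable def build (hjn : j ≤ n) (S : Finset (Fin n)) (hS : S.card = j)
    (σ : Equiv.Perm (Fin j)) : Equiv.Perm (Fin n) :=
  Equiv.ofBijective _ ((Finite.injective_iff_bijective).mp (buildFun_inj hjn S hS σ))

lemma build_apply_lt (hjn : j ≤ n) (S : Finset (Fin n)) (hS : S.card = j)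
    (σ : Equiv.Perm (Fin j)) (i : Fin n) (h : (i:ℕ) < j) :
    build hjn S hS σ i = S.orderEmbOfFin hS (σ ⟨i, h⟩) := by
  simp [build, Equiv.ofBijective_apply, buildFun, h]

lemma build_apply_ge (hjn : j ≤ n) (S : Finset (Fin n)) (hS : S.card = j)
    (σ : Equiv.Perm (Fin j)) (i : Fin n) (h : j ≤ (i:ℕ)) :
    build hjn S hS σ i = Sᶜ.orderEmbOfFin (complCard hjn S hS) ⟨(i:ℕ) - j, by omega⟩ := by
  simp [build, Equiv.ofBijective_apply, buildFun, Nat.not_lt.mpr h]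


lemma descSet_build_lt (hjn : j ≤ n) (S : Finset (Fin n)) (hS : S.card = j)
    (σ : Equiv.Perm (Fin j)) {i : ℕ} (h0 : 0 < i) (hij : i < j) :
    i ∈ descSet n (build hjn S hS σ) ↔ i ∈ descSet j σ := by
  rw [mem_descSet h0 (by omega), mem_descSet h0 hij,
    build_apply_lt hjn S hS σ ⟨i, by omega⟩ hij,
    build_apply_lt hjn S hS σ ⟨i - 1, by omega⟩ (by simp; omega)]
  rw [(S.orderEmbOfFin hS).lt_iff_lt]

lemma descSet_build_gt (hjn : j ≤ n) (S : Finset (Fin n)) (hS : S.card = j)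
    (σ : Equiv.Perm (Fin j)) {i : ℕ} (h0 : j < i) (hin : i < n) :
    i ∉ descSet n (build hjn S hS σ) := by
  rw [mem_descSet (by omega) hin,
    build_apply_ge hjn S hS σ ⟨i, hin⟩ (by simp; omega),
    build_apply_ge hjn S hS σ ⟨i - 1, by omega⟩ (by simp; omega)]
  intro hlt
  rw [(Sᶜ.orderEmbOfFin (complCard hjn S hS)).lt_iff_lt] at hlt
  have := Fin.lt_def.mp hlt
  simp at this
  omega

lemma build_image (hjn : j ≤ n) (S : Finset (Fin n)) (hS : S.card = j)
    (σ : Equiv.Perm (Fin j)) :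
    Finset.image (fun x : Fin j => build hjn S hS σ (Fin.castLE hjn x)) Finset.univ = S := by
  apply Finset.eq_of_subset_of_card_le
  · intro y hy
    obtain ⟨x, -, hx⟩ := Finset.mem_image.mp hy
    rw [build_apply_lt hjn S hS σ _ (by simpa using x.isLt)] at hx
    rw [← hx]
    exact Finset.orderEmbOfFin_mem _ _ _
  · have hinj : Function.Injective (fun x : Fin j => build hjn S hS σ (Fin.castLE hjn x)) :=
      fun a b h => Fin.castLE_injective hjn ((build hjn S hS σ).injective h)
    rw [Finset.card_image_of_injective _ hinj]
    simp [hS]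

lemma aA_rec (J : Finset ℕ) (hj : 0 < j) (hjn : j ≤ n) (hJ : ∀ i ∈ J, i < j) :
    aA (insert j J) n = n.choose j * aA J j := by
  classical
  have key : ((Finset.univ.powersetCard j : Finset (Finset (Fin n))) ×ˢ
      (Finset.univ.filter fun σ : Equiv.Perm (Fin j) => descSet j σ ⊆ J)).card
      = (Finset.univ.filter fun π : Equiv.Perm (Fin n) => descSet n π ⊆ insert j J).card := by
    apply Finset.card_bij (fun a ha => build hjn a.1
      (Finset.mem_powersetCard_univ.mp (Finset.mem_product.mp ha).1) a.2)
    · -- maps into target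
      intro a ha
      simp only [Finset.mem_filter, Finset.mem_univ, true_and]
      intro i hi
      obtain ⟨h0, h1⟩ := pos_of_mem_descSet hi
      rcases lt_trichotomy i j with h | h | h
      · have hmem := (descSet_build_lt _ _ _ _ h0 h).mp hi
        have hσ := (Finset.mem_filter.mp (Finset.mem_product.mp ha).2).2
        exact Finset.mem_insert_of_mem (hσ hmem)
      · exact h ▸ Finset.mem_insert_self _ _
      · exact absurd hi (descSet_build_gt _ _ _ _ h h1)
    · -- injective
      rintro ⟨S1, σ1⟩ ha1 ⟨S2, σ2⟩ ha2 h
      have hc1 : S1.card = j := Finset.mem_powersetCard_univ.mp (Finset.mem_product.mp ha1).1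
      have hc2 : S2.card = j := Finset.mem_powersetCard_univ.mp (Finset.mem_product.mp ha2).1
      have hb : build hjn S1 hc1 σ1 = build hjn S2 hc2 σ2 := h
      have h1 := build_image hjn S1 hc1 σ1
      have h2 := build_image hjn S2 hc2 σ2
      rw [hb] at h1
      have hSS : S1 = S2 := h1.symm.trans h2
      subst hSS
      have hσ : σ1 = σ2 := by
        ext x
        have hx := DFunLike.congr_fun hb (Fin.castLE hjn x)
        rw [build_apply_lt hjn S1 hc1 σ1 _ (by simpa using x.isLt),
          build_apply_lt hjn S1 hc2 σ2 _ (by simpa using x.isLt)] at hx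
        have := (S1.orderEmbOfFin hc1).injective hx
        exact congrArg Fin.val this
      rw [hσ]
    · -- surjective
      intro π hπmem
      have hπ : descSet n π ⊆ insert j J := (Finset.mem_filter.mp hπmem).2
      set S : Finset (Fin n) :=
        Finset.image (fun x : Fin j => π (Fin.castLE hjn x)) Finset.univ with hSdef
      have hS : S.card = j := by
        have hinj : Function.Injective (fun x : Fin j => π (Fin.castLE hjn x)) :=
          fun a b h => Fin.castLE_injective hjn (π.injective h)
        rw [hSdef, Finset.card_image_of_injective _ hinj]
        simp
      have hmemS : ∀ x : Fin j, π (Fin.castLE hjn x) ∈ S := by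
        intro x
        rw [hSdef]
        exact Finset.mem_image_of_mem _ (Finset.mem_univ x)
      set f : Fin j → Fin j := fun x => (S.orderIsoOfFin hS).symm ⟨π (Fin.castLE hjn x), hmemS x⟩
        with hfdef
      have hfinj : Function.Injective f := by
        intro x y hxy
        have h1 := (S.orderIsoOfFin hS).symm.injective hxy
        have h2 : π (Fin.castLE hjn x) = π (Fin.castLE hjn y) := congrArg Subtype.val h1
        exact Fin.castLE_injective hjn (π.injective h2)
      set σ : Equiv.Perm (Fin j) := Equiv.ofBijective f (Finite.injective_iff_bijective.mp hfinj)
        with hσdef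
      have hσev : ∀ x : Fin j, S.orderEmbOfFin hS (σ x) = π (Fin.castLE hjn x) := by
        intro x
        have : σ x = f x := rfl
        rw [this, hfdef]
        rw [← Finset.coe_orderIsoOfFin_apply, OrderIso.apply_symm_apply]
      have hbuild : build hjn S hS σ = π := by
        apply Equiv.ext
        intro i
        rcases lt_or_ge (i : ℕ) j with h | h
        · rw [build_apply_lt hjn S hS σ i h, hσev]
          congr 1
        · rw [build_apply_ge hjn S hS σ i h]
          have hunique : (fun x : Fin (n - j) => π ⟨j + (x : ℕ), by omega⟩)
              = ⇑(Sᶜ.orderEmbOfFin (complCard hjn S hS)) := by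
            apply Finset.orderEmbOfFin_unique
            · intro x
              rw [Finset.mem_compl]
              intro hmem
              obtain ⟨y, -, hy⟩ := Finset.mem_image.mp hmem
              have h1 := π.injective hy
              have h2 := congrArg Fin.val h1
              simp only [Fin.coe_castLE] at h2
              omega
            · intro x y hxy
              apply asc_of_no_desc (show (⟨j + (x:ℕ), by omega⟩ : Fin n) < ⟨j + (y:ℕ), by omega⟩
                from by simp only [Fin.lt_def]; omega)
              intro i hi hi' hdesc
              have hmem := hπ hdesc
              rcases Finset.mem_insert.mp hmem with rfl | hmem2
              · simp at hi
              · have := hJ _ hmem2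
                simp at hi
                omega
          have hi2 : i = ⟨j + ((i:ℕ) - j), by omega⟩ := Fin.ext (by simp; omega)
          conv_rhs => rw [hi2]
          exact (congrFun hunique ⟨(i:ℕ) - j, by omega⟩).symm
      refine ⟨(S, σ), ?_, hbuild⟩
      rw [Finset.mem_product]
      constructor
      · exact Finset.mem_powersetCard_univ.mpr hS
      · rw [Finset.mem_filter]
        refine ⟨Finset.mem_univ _, ?_⟩
        intro i hi
        obtain ⟨h0, h1⟩ := pos_of_mem_descSet hi
        have := (descSet_build_lt hjn S hS σ h0 h1).mpr hi
        rw [hbuild] at this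
        rcases Finset.mem_insert.mp (hπ this) with rfl | hmem2
        · omega
        · exact hmem2
  rw [aA, aA, ← key, Finset.card_product, Finset.card_powersetCard]
  simp

lemma descSet_one (n : ℕ) : descSet n 1 = ∅ := by
  ext i
  simp only [Finset.notMem_empty, iff_false]
  intro hi
  obtain ⟨h0, h1⟩ := pos_of_mem_descSet hi
  rw [mem_descSet h0 h1] at hi
  simp only [Equiv.Perm.coe_one, id_eq, Fin.lt_def] at hi
  omega

lemma eq_one_of_descSet_empty {n : ℕ} {π : Equiv.Perm (Fin n)} (h : descSet n π = ∅) :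
    π = 1 := by
  have hsm : StrictMono π := by
    intro a b hab
    exact asc_of_no_desc hab (fun i _ _ => by rw [h]; exact Finset.notMem_empty i)
  have hcard : (Finset.univ : Finset (Fin n)).card = n := by simp
  have h1 : ⇑π = Finset.univ.orderEmbOfFin hcard :=
    Finset.orderEmbOfFin_unique hcard (fun x => Finset.mem_univ _) hsm
  have h2 : (id : Fin n → Fin n) = Finset.univ.orderEmbOfFin hcard :=
    Finset.orderEmbOfFin_unique hcard (fun x => Finset.mem_univ _) strictMono_id
  apply Equiv.ext
  intro x
  have := congrFun (h1.trans h2.symm) x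
  simpa using this

lemma aA_empty (n : ℕ) : aA ∅ n = 1 := by
  rw [aA]
  have : (Finset.univ.filter fun π : Equiv.Perm (Fin n) => descSet n π ⊆ ∅)
      = {1} := by
    ext π
    simp only [Finset.mem_filter, Finset.mem_univ, true_and, Finset.mem_singleton,
      Finset.subset_empty]
    constructor
    · exact eq_one_of_descSet_empty
    · rintro rfl; exact descSet_one n
  rw [this, Finset.card_singleton]

lemma aA_eq_sum (I : Finset ℕ) (n : ℕ) : aA I n = ∑ J ∈ I.powerset, dA J n := by
  classical
  rw [aA]
  have : (Finset.univ.filter fun π : Equiv.Perm (Fin n) => descSet n π ⊆ I)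
      = I.powerset.biUnion
        (fun J => Finset.univ.filter fun π : Equiv.Perm (Fin n) => descSet n π = J) := by
    ext π
    simp only [Finset.mem_filter, Finset.mem_univ, true_and, Finset.mem_biUnion,
      Finset.mem_powerset]
    constructor
    · intro h; exact ⟨descSet n π, h, rfl⟩
    · rintro ⟨J, hJ, rfl⟩; exact hJ
  rw [this, Finset.card_biUnion]
  · rfl
  · intro J hJ K hK hJK
    apply Finset.disjoint_left.mpr
    intro π h1 h2
    simp only [Finset.mem_filter] at h1 h2
    exact hJK (h1.2 ▸ h2.2 ▸ rfl)

lemma sum_powerset_neg_one_pow_card_rat {x : Finset ℕ} :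
    (∑ m ∈ x.powerset, (-1 : ℚ) ^ m.card) = if x = ∅ then 1 else 0 := by
  have h := Finset.sum_powerset_neg_one_pow_card (x := x)
  have h2 := congrArg (fun z : ℤ => (z : ℚ)) h
  push_cast [apply_ite (fun z : ℤ => (z : ℚ))] at h2
  simpa using h2

lemma moebius (f : Finset ℕ → ℚ) (I : Finset ℕ) :
    ∑ J ∈ I.powerset, (-1 : ℚ) ^ (I.card - J.card) * (∑ K ∈ J.powerset, f K) = f I := by
  classical
  simp_rw [Finset.mul_sum]
  rw [Finset.sum_comm' (t' := I.powerset)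
    (s' := fun K => I.powerset.filter (fun J => K ⊆ J))]
  · have hinner : ∀ K ∈ I.powerset,
        ∑ J ∈ I.powerset.filter (fun J => K ⊆ J), (-1 : ℚ) ^ (I.card - J.card) * f K
        = if K = I then f K else 0 := by
      intro K hK
      have hKI : K ⊆ I := Finset.mem_powerset.mp hK
      have hbij : ∑ J ∈ I.powerset.filter (fun J => K ⊆ J), (-1 : ℚ) ^ (I.card - J.card) * f K
          = ∑ L ∈ (I \ K).powerset, (-1 : ℚ) ^ (I.card - (K.card + L.card)) * f K := by
        apply Finset.sum_nbij' (i := fun J => J \ K) (j := fun L => K ∪ L)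
        · intro J hJ
          simp only [Finset.mem_filter, Finset.mem_powerset] at hJ
          exact Finset.mem_powerset.mpr (fun x hx =>
            Finset.mem_sdiff.mpr ⟨hJ.1 (Finset.mem_sdiff.mp hx).1, (Finset.mem_sdiff.mp hx).2⟩)
        · intro L hL
          have hLsub : L ⊆ I \ K := Finset.mem_powerset.mp hL
          simp only [Finset.mem_filter, Finset.mem_powerset]
          exact ⟨Finset.union_subset hKI (fun x hx => (Finset.mem_sdiff.mp (hLsub hx)).1),
            Finset.subset_union_left⟩
        · intro J hJ
          simp only [Finset.mem_filter, Finset.mem_powerset] at hJ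
          exact Finset.union_sdiff_of_subset hJ.2
        · intro L hL
          have hLsub : L ⊆ I \ K := Finset.mem_powerset.mp hL
          rw [Finset.union_sdiff_cancel_left]
          exact Finset.disjoint_left.mpr (fun x hx hxL => (Finset.mem_sdiff.mp (hLsub hxL)).2 hx)
        · intro J hJ
          simp only [Finset.mem_filter, Finset.mem_powerset] at hJ
          have hsd := Finset.card_sdiff_of_subset hJ.2
          have hcK := Finset.card_le_card hJ.2
          have hcardJ : I.card - J.card = I.card - (K.card + (J \ K).card) := by omega
          rw [hcardJ]
      rw [hbij]
      have hstep : ∀ L ∈ (I \ K).powerset,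
          (-1 : ℚ) ^ (I.card - (K.card + L.card)) * f K
          = ((-1 : ℚ) ^ (I \ K).card * (-1 : ℚ) ^ L.card) * f K := by
        intro L hL
        have hLsub : L ⊆ I \ K := Finset.mem_powerset.mp hL
        have hLcard : L.card ≤ (I \ K).card := Finset.card_le_card hLsub
        have hsd : (I \ K).card = I.card - K.card := Finset.card_sdiff_of_subset hKI
        have hKc : K.card ≤ I.card := Finset.card_le_card hKI
        congr 1
        have hkey : (-1 : ℚ) ^ ((I \ K).card + L.card)
            = (-1 : ℚ) ^ ((I.card - (K.card + L.card)) + 2 * L.card) := by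
          congr 1
          omega
        rw [← pow_add] at *
        rw [hkey, pow_add, pow_mul]
        norm_num
      rw [Finset.sum_congr rfl hstep]
      simp_rw [mul_assoc, ← Finset.mul_sum, ← Finset.sum_mul]
      rw [sum_powerset_neg_one_pow_card_rat]
      by_cases hcase : K = I
      · subst hcase
        simp
      · have hne : ¬ (I \ K) = ∅ := by
          intro hemp
          apply hcase
          apply Finset.Subset.antisymm hKI
          intro x hx
          by_contra hxK
          exact absurd (Finset.mem_sdiff.mpr ⟨hx, hxK⟩) (hemp ▸ Finset.notMem_empty x)
        rw [if_neg hne, if_neg hcase]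
        ring
    rw [Finset.sum_congr rfl hinner, Finset.sum_ite_eq' I.powerset I f,
      if_pos (Finset.mem_powerset_self I)]
  · intro J K
    simp only [Finset.mem_powerset, Finset.mem_filter]
    constructor
    · rintro ⟨h1, h2⟩; exact ⟨⟨h1, h2⟩, h2.trans h1⟩
    · rintro ⟨⟨h1, h2⟩, h3⟩; exact ⟨h1, h2⟩

lemma exists_perm_descSet (K : Finset ℕ) : ∀ (n : ℕ), (∀ i ∈ K, 0 < i ∧ i < n) →
    ∃ π : Equiv.Perm (Fin n), descSet n π = K := by
  induction K using Finset.strongInduction with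
  | _ K ih =>
  intro n hK
  rcases K.eq_empty_or_nonempty with rfl | hne
  · exact ⟨1, descSet_one n⟩
  set k := K.max' hne with hkdef
  have hk_mem : k ∈ K := K.max'_mem hne
  obtain ⟨hk0, hkn⟩ := hK k hk_mem
  have hK' : ∀ i ∈ K.erase k, 0 < i ∧ i < k := fun i hi => by
    have h1 := (hK i (Finset.mem_of_mem_erase hi)).1
    have h2 := K.le_max' i (Finset.mem_of_mem_erase hi)
    have h3 := Finset.ne_of_mem_erase hi
    exact ⟨h1, lt_of_le_of_ne h2 h3⟩
  obtain ⟨σ, hσ⟩ := ih (K.erase k) (Finset.erase_ssubset hk_mem) k hK'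
  set S : Finset (Fin n) :=
    Finset.image (fun x : Fin k => (⟨n - k + (x : ℕ), by omega⟩ : Fin n)) Finset.univ with hSdef
  have hinj : Function.Injective (fun x : Fin k => (⟨n - k + (x : ℕ), by omega⟩ : Fin n)) := by
    intro a b hab
    have := congrArg Fin.val hab
    simp only at this
    exact Fin.ext (by omega)
  have hS : S.card = k := by
    rw [hSdef, Finset.card_image_of_injective _ hinj]
    simp
  have hSmem : ∀ y : Fin n, y ∈ S ↔ n - k ≤ (y : ℕ) := by
    intro y
    rw [hSdef]
    constructor
    · intro hy
      obtain ⟨x, -, hx⟩ := Finset.mem_image.mp hy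
      have := congrArg Fin.val hx
      simp only at this
      omega
    · intro hy
      apply Finset.mem_image.mpr
      refine ⟨⟨(y : ℕ) - (n - k), by omega⟩, Finset.mem_univ _, ?_⟩
      exact Fin.ext (by simp; omega)
  refine ⟨build (le_of_lt hkn) S hS σ, ?_⟩
  ext i
  by_cases hi0 : 0 < i
  case neg =>
    simp only [Nat.not_lt, Nat.le_zero] at hi0
    subst hi0
    constructor
    · intro h; exact absurd (pos_of_mem_descSet h).1 (by omega)
    · intro h; exact absurd (hK 0 h).1 (by omega)
  by_cases hin : i < n
  case neg =>
    constructor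
    · intro h; exact absurd (pos_of_mem_descSet h).2 hin
    · intro h; exact absurd (hK i h).2 hin
  rcases lt_trichotomy i k with h | rfl | h
  · rw [descSet_build_lt _ _ _ _ hi0 h, hσ, Finset.mem_erase]
    constructor
    · rintro ⟨-, h2⟩; exact h2
    · intro h2; exact ⟨by omega, h2⟩
  · simp only [hk_mem, iff_true]
    rw [mem_descSet hi0 hin, build_apply_ge _ _ _ _ ⟨k, hin⟩ (by simp),
      build_apply_lt _ _ _ _ ⟨k - 1, by omega⟩ (by simp; omega)]
    have hmem1 : (Sᶜ.orderEmbOfFin (complCard (le_of_lt hkn) S hS)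
        ⟨(⟨k, hin⟩ : Fin n).val - k, by omega⟩) ∈ Sᶜ := Finset.orderEmbOfFin_mem _ _ _
    have hmem2 : ∀ z, (S.orderEmbOfFin hS z) ∈ S := fun z => Finset.orderEmbOfFin_mem _ _ _
    have hmem2' := hmem2 (σ ⟨(⟨k - 1, by omega⟩ : Fin n).val, by simp; omega⟩)
    rw [Finset.mem_compl, hSmem] at hmem1
    rw [hSmem] at hmem2'
    rw [Fin.lt_def]
    omega
  · constructor
    · intro hd; exact absurd hd (descSet_build_gt _ _ _ _ h hin)
    · intro hd
      have := K.le_max' i hd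
      omega

lemma dA_pos {K : Finset ℕ} {n : ℕ} (hK : ∀ i ∈ K, 0 < i ∧ i < n) : 0 < dA K n := by
  obtain ⟨π, hπ⟩ := exists_perm_descSet K n hK
  rw [dA, Finset.card_pos]
  exact ⟨π, Finset.mem_filter.mpr ⟨Finset.mem_univ _, hπ⟩⟩

def cA (K : Finset ℕ) : ℕ :=
  if h : K.Nonempty then aA (K.erase (K.max' h)) (K.max' h) else 1

lemma sup_eq_max' {K : Finset ℕ} (h : K.Nonempty) : K.sup id = K.max' h := by
  rw [Finset.max'_eq_sup', Finset.sup'_eq_sup]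

lemma aA_choose (K : Finset ℕ) (hKpos : ∀ i ∈ K, 0 < i) {n : ℕ} (hn : K.sup id ≤ n) :
    aA K n = n.choose (K.sup id) * cA K := by
  classical
  rcases K.eq_empty_or_nonempty with rfl | hne
  · simp [aA_empty, cA]
  · have hsup : K.sup id = K.max' hne := sup_eq_max' hne
    set k := K.max' hne with hkdef
    have hk_mem := K.max'_mem hne
    have hk0 : 0 < k := hKpos k hk_mem
    have hkn : k ≤ n := hsup ▸ hn
    have hins : insert k (K.erase k) = K := Finset.insert_erase hk_mem
    have herase : ∀ i ∈ K.erase k, i < k := fun i hi =>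
      lt_of_le_of_ne (K.le_max' i (Finset.mem_of_mem_erase hi)) (Finset.ne_of_mem_erase hi)
    have h1 : aA K n = n.choose k * aA (K.erase k) k := by
      conv_lhs => rw [← hins]
      exact aA_rec (K.erase k) hk0 hkn herase
    rw [h1, hsup, cA, dif_pos hne]

lemma aA_cast_sum (K : Finset ℕ) (n : ℕ) :
    (aA K n : ℚ) = ∑ L ∈ K.powerset, (dA L n : ℚ) := by
  rw [aA_eq_sum]
  push_cast
  rfl


/-- Theorem 2.2: `d(I;n)` agrees with a polynomial in `n` of degree exactly
`m = max(I ∪ {0})` for all `n > m`. -/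
theorem stmt_1 (I : Finset ℕ) (h0 : 0 ∉ I) (m : ℕ) (hm : m = I.sup id) :
    ∃ p : Polynomial ℚ, p.degree = (m : ℕ) ∧
      ∀ n : ℕ, m < n → p.eval (n : ℚ) = dA I n := by
  classical
  rcases I.eq_empty_or_nonempty with rfl | hne
  · refine ⟨1, ?_, ?_⟩
    · simp only [Finset.sup_empty] at hm
      subst hm
      simp [Polynomial.degree_one]
    · intro n hn
      have h1 : dA ∅ n = 1 := by
        have h2 := aA_eq_sum ∅ n
        rw [aA_empty] at h2
        simpa using h2.symm
      simp [h1]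
  · have hpos : ∀ i ∈ I, 0 < i := fun i hi => Nat.pos_of_ne_zero (fun h => h0 (h ▸ hi))
    have hsup : I.sup id = I.max' hne := sup_eq_max' hne
    have hm_mem : m ∈ I := by rw [hm, hsup]; exact I.max'_mem hne
    have hm0 : 0 < m := hpos m hm_mem
    set p : Polynomial ℚ := ∑ K ∈ I.powerset,
      ((-1 : ℚ) ^ (I.card - K.card) * (cA K : ℚ) / (Nat.factorial (K.sup id) : ℚ)) • descPochhammer ℚ (K.sup id)
      with hpdef
    have hsupK : ∀ K ∈ I.powerset, K.sup id ≤ m := fun K hK =>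
      hm ▸ Finset.sup_mono (Finset.mem_powerset.mp hK)
    have heval : ∀ n : ℕ, m < n → p.eval (n : ℚ) = dA I n := by
      intro n hn
      rw [hpdef, Polynomial.eval_finset_sum]
      have hterm : ∀ K ∈ I.powerset,
          Polynomial.eval (n : ℚ) (((-1 : ℚ) ^ (I.card - K.card) * (cA K : ℚ) / (Nat.factorial (K.sup id) : ℚ)) •
            descPochhammer ℚ (K.sup id))
          = (-1 : ℚ) ^ (I.card - K.card) * (aA K n : ℚ) := by
        intro K hK
        rw [Polynomial.eval_smul, smul_eq_mul, descPochhammer_eval_eq_descFactorial,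
          Nat.descFactorial_eq_factorial_mul_choose]
        rw [aA_choose K (fun i hi => hpos i (Finset.mem_powerset.mp hK hi))
          (le_trans (hsupK K hK) (le_of_lt hn))]
        have hfac : (Nat.factorial (K.sup id) : ℚ) ≠ 0 := Nat.cast_ne_zero.mpr (Nat.factorial_ne_zero _)
        push_cast
        field_simp
      rw [Finset.sum_congr rfl hterm]
      have hmoeb := moebius (fun K => (dA K n : ℚ)) I
      rw [← hmoeb]
      apply Finset.sum_congr rfl
      intro K _
      rw [aA_cast_sum]
    have hdegle : p.degree ≤ (m : ℕ) := by
      rw [hpdef]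
      apply le_trans (Polynomial.degree_sum_le _ _)
      apply Finset.sup_le
      intro K hK
      apply le_trans (Polynomial.degree_smul_le _ _)
      apply le_trans (Polynomial.degree_le_natDegree)
      rw [descPochhammer_natDegree]
      exact_mod_cast hsupK K hK
    have hcoeff : p.coeff m = (dA (I.erase m) m : ℚ) / (Nat.factorial m : ℚ) := by
      rw [hpdef, Polynomial.finset_sum_coeff]
      have hterm : ∀ K ∈ I.powerset,
          (((-1 : ℚ) ^ (I.card - K.card) * (cA K : ℚ) / (Nat.factorial (K.sup id) : ℚ)) •
            descPochhammer ℚ (K.sup id)).coeff m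
          = if m ∈ K then (-1 : ℚ) ^ (I.card - K.card) * (cA K : ℚ) / (Nat.factorial m : ℚ) else 0 := by
        intro K hK
        rw [Polynomial.coeff_smul, smul_eq_mul]
        by_cases hmK : m ∈ K
        · have hsupm : K.sup id = m := le_antisymm (hsupK K hK) (Finset.le_sup (f := id) hmK)
          rw [if_pos hmK, hsupm]
          have hc1 : (descPochhammer ℚ m).coeff m = 1 := by
            have hnd := descPochhammer_natDegree (R := ℚ) m
            have hmon := (monic_descPochhammer ℚ m).coeff_natDegree
            rwa [hnd] at hmon
          rw [hc1, mul_one]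
        · have hsuplt : K.sup id < m := by
            rcases K.eq_empty_or_nonempty with rfl | hKne
            · simpa using hm0
            · have hsupK' : K.sup id = K.max' hKne := sup_eq_max' hKne
              have h1 : K.max' hKne ∈ K := K.max'_mem hKne
              have h2 : K.sup id ≤ m := hsupK K hK
              have h3 : K.sup id ≠ m := fun h => hmK (h ▸ hsupK' ▸ h1)
              omega
          rw [if_neg hmK, Polynomial.coeff_eq_zero_of_natDegree_lt
            (by rw [descPochhammer_natDegree]; exact hsuplt), mul_zero]
      rw [Finset.sum_congr rfl hterm]
      have hinsI : insert m (I.erase m) = I := Finset.insert_erase hm_mem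
      have hmnotin : m ∉ I.erase m := Finset.notMem_erase m I
      have hsum := Finset.sum_powerset_insert (s := I.erase m) (a := m) hmnotin
        (fun K => if m ∈ K then (-1 : ℚ) ^ (I.card - K.card) * (cA K : ℚ) / (Nat.factorial m : ℚ) else 0)
      rw [hinsI] at hsum
      rw [hsum]
      have hz : ∀ K ∈ (I.erase m).powerset,
          (if m ∈ K then (-1 : ℚ) ^ (I.card - K.card) * (cA K : ℚ) / (Nat.factorial m : ℚ) else 0) = 0 := by
        intro K hK
        rw [if_neg (fun hc => hmnotin (Finset.mem_powerset.mp hK hc))]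
      rw [Finset.sum_congr rfl hz, Finset.sum_const_zero, zero_add]
      have hifpos : ∀ K ∈ (I.erase m).powerset,
          (if m ∈ insert m K then
            (-1 : ℚ) ^ (I.card - (insert m K).card) * (cA (insert m K) : ℚ) / (Nat.factorial m : ℚ) else 0)
          = (-1 : ℚ) ^ (I.card - (insert m K).card) * (cA (insert m K) : ℚ) / (Nat.factorial m : ℚ) := by
        intro K hK
        rw [if_pos (Finset.mem_insert_self m K)]
      rw [Finset.sum_congr rfl hifpos]
      have hterm2 : ∀ K ∈ (I.erase m).powerset,
          (-1 : ℚ) ^ (I.card - (insert m K).card) * (cA (insert m K) : ℚ) / (Nat.factorial m : ℚ)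
          = ((-1 : ℚ) ^ ((I.erase m).card - K.card) * (aA K m : ℚ)) / (Nat.factorial m : ℚ) := by
        intro K hK
        have hKsub : K ⊆ I.erase m := Finset.mem_powerset.mp hK
        have hmK : m ∉ K := fun hc => hmnotin (hKsub hc)
        have hKlt : ∀ i ∈ K, i < m := fun i hi => by
          have h1 := Finset.mem_of_mem_erase (hKsub hi)
          have h2 := Finset.ne_of_mem_erase (hKsub hi)
          have h3 : i ≤ m := hm ▸ Finset.le_sup (f := id) h1
          omega
        have hcA : cA (insert m K) = aA K m := by
          have hne2 : (insert m K).Nonempty := Finset.insert_nonempty m K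
          have hmax : (insert m K).max' hne2 = m := by
            apply le_antisymm
            · apply Finset.max'_le
              intro y hy
              rcases Finset.mem_insert.mp hy with rfl | hy2
              · exact le_refl _
              · exact le_of_lt (hKlt y hy2)
            · exact Finset.le_max' _ m (Finset.mem_insert_self m K)
          simp only [cA]
          rw [dif_pos hne2]
          congr 1 <;> rw [hmax]
          exact Finset.erase_insert hmK
        have hcard1 : (insert m K).card = K.card + 1 := Finset.card_insert_of_notMem hmK
        have hcard2 : I.card = (I.erase m).card + 1 := by
          have he := Finset.card_erase_of_mem hm_mem
          have hIpos : 0 < I.card := Finset.card_pos.mpr hne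
          omega
        have hcard3 : K.card ≤ (I.erase m).card := Finset.card_le_card hKsub
        have hexp : I.card - (K.card + 1) = (I.erase m).card - K.card := by omega
        rw [hcA, hcard1, hexp]
      rw [Finset.sum_congr rfl hterm2, ← Finset.sum_div]
      congr 1
      have hmoeb := moebius (fun K => (dA K m : ℚ)) (I.erase m)
      rw [← hmoeb]
      apply Finset.sum_congr rfl
      intro K _
      rw [aA_cast_sum]
    have hdApos : 0 < dA (I.erase m) m := by
      apply dA_pos
      intro i hi
      have h1 := hpos i (Finset.mem_of_mem_erase hi)
      have h2 : i ≤ m := hm ▸ Finset.le_sup (f := id) (Finset.mem_of_mem_erase hi)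
      have h3 := Finset.ne_of_mem_erase hi
      exact ⟨h1, by omega⟩
    have hcoeff_ne : p.coeff m ≠ 0 := by
      rw [hcoeff]
      apply div_ne_zero
      · exact_mod_cast Nat.pos_iff_ne_zero.mp hdApos
      · exact_mod_cast Nat.factorial_ne_zero m
    refine ⟨p, ?_, heval⟩
    exact le_antisymm hdegle (Polynomial.le_degree_of_ne_zero hcoeff_ne)
end

section
/- If (a_k) is a nonnegative log-concave sequence with no internal zeros and ℓ is a positive integer, then the sequence (b_k) defined by b_k = a_k + a_{k+1} + ⋯ + a_{k+ℓ} is log-concave. -/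
/-!
For a nonnegative log-concave sequence without internal zeros the ratios `a (i + 1) / a i`
are antitone, in the cross-multiplied form `a i * a (j + 1) ≤ a (i + 1) * a j` for `i ≤ j`.
Splitting off the first or last term of each window sum, `b k * b (k + 2) ≤ b (k + 1) ^ 2`
becomes a sum of three inequalities, each of which is a sum of instances of that ratio
inequality.
-/

open Finset

lemma mul_succ_le_succ_mul_of_logConcave (a : ℕ → ℝ) (hnonneg : ∀ k, 0 ≤ a k)
    (hlc : ∀ k, 1 ≤ k → a (k - 1) * a (k + 1) ≤ a k ^ 2)
    (hniz : ∀ i j k, i ≤ k → k ≤ j → a i ≠ 0 → a j ≠ 0 → a k ≠ 0)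
    {i j : ℕ} (hij : i ≤ j) : a i * a (j + 1) ≤ a (i + 1) * a j := by
  induction j, hij using Nat.le_induction with
  | base => rw [mul_comm]
  | succ j hij ih =>
    rcases (hnonneg i).eq_or_lt with hi | hi
    · rw [← hi, zero_mul]
      exact mul_nonneg (hnonneg _) (hnonneg _)
    rcases (hnonneg (j + 2)).eq_or_lt with hj₂ | hj₂
    · rw [← hj₂, mul_zero]
      exact mul_nonneg (hnonneg _) (hnonneg _)
    have hpos : ∀ k, i ≤ k → k ≤ j + 2 → 0 < a k := fun k hik hkj =>
      (hnonneg k).lt_of_ne' (hniz i (j + 2) k hik hkj hi.ne' hj₂.ne')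
    have hlc' : a j * a (j + 2) ≤ a (j + 1) ^ 2 := by
      simpa using hlc (j + 1) (by omega)
    refine le_of_mul_le_mul_right ?_ (hpos j hij (by omega))
    calc a i * a (j + 2) * a j = a i * (a j * a (j + 2)) := by ring
      _ ≤ a i * a (j + 1) ^ 2 := by gcongr
      _ = a i * a (j + 1) * a (j + 1) := by ring
      _ ≤ a (i + 1) * a j * a (j + 1) := by gcongr; exact (hpos _ (by omega) (by omega)).le
      _ = a (i + 1) * a (j + 1) * a j := by ring

lemma sum_window_mul_sum_window_le_sq (a : ℕ → ℝ)
    (hratio : ∀ i j, i ≤ j → a i * a (j + 1) ≤ a (i + 1) * a j) (n k : ℕ) :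
    (∑ t ∈ range (n + 1), a (k + t)) * (∑ t ∈ range (n + 1), a (k + 2 + t)) ≤
      (∑ t ∈ range (n + 1), a (k + 1 + t)) ^ 2 := by
  set C := ∑ t ∈ range n, a (k + 1 + t)
  set C' := ∑ t ∈ range n, a (k + 2 + t)
  have split_first (s : ℕ) :
      ∑ t ∈ range (n + 1), a (s + t) = a s + ∑ t ∈ range n, a (s + 1 + t) := by
    rw [sum_range_succ', add_comm, add_zero]
    exact congrArg _ (sum_congr rfl fun t _ => by congr 1; omega)
  have hA : a k * C' ≤ a (k + 1) * C := by
    rw [mul_sum, mul_sum]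
    refine sum_le_sum fun t _ => ?_
    simpa only [show k + 1 + t + 1 = k + 2 + t by omega] using hratio k (k + 1 + t) (by omega)
  have hB : a k * a (k + 2 + n) ≤ a (k + 1) * a (k + 1 + n) := by
    simpa only [show k + 1 + n + 1 = k + 2 + n by omega] using hratio k (k + 1 + n) (by omega)
  have hC : C * a (k + 2 + n) ≤ C' * a (k + 1 + n) := by
    rw [sum_mul, sum_mul]
    refine sum_le_sum fun t ht => ?_
    have htn : t ≤ n := (mem_range.mp ht).le
    simpa only [show k + 1 + n + 1 = k + 2 + n by omega, show k + 1 + t + 1 = k + 2 + t by omega]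
      using hratio (k + 1 + t) (k + 1 + n) (by omega)
  calc _ = (a k + C) * (C' + a (k + 2 + n)) := by rw [split_first, sum_range_succ]
    _ ≤ (a (k + 1) + C') * (C + a (k + 1 + n)) := by linear_combination hA + hB + hC
    _ = _ := by rw [← split_first, ← sum_range_succ, sq]

theorem stmt_7_general (a : ℕ → ℝ) (ℓ : ℕ)
    (hnonneg : ∀ k, 0 ≤ a k)
    (hlc : ∀ k, 1 ≤ k → a (k - 1) * a (k + 1) ≤ a k ^ 2)
    (hniz : ∀ i j k, i ≤ k → k ≤ j → a i ≠ 0 → a j ≠ 0 → a k ≠ 0) :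
    ∀ k, 1 ≤ k →
      (∑ t ∈ Finset.range (ℓ + 1), a (k - 1 + t)) *
        (∑ t ∈ Finset.range (ℓ + 1), a (k + 1 + t)) ≤
      (∑ t ∈ Finset.range (ℓ + 1), a (k + t)) ^ 2 := by
  intro k hk
  obtain ⟨m, rfl⟩ := Nat.exists_eq_add_of_le' hk
  simpa using sum_window_mul_sum_window_le_sq a
    (fun i j hij => mul_succ_le_succ_mul_of_logConcave a hnonneg hlc hniz hij) ℓ m

/-- Lemma 3.5(2): if `(a_k)` is nonnegative, log-concave, with no internal
zeros, and `ℓ ≥ 1`, then `(a_k + a_{k+1} + ⋯ + a_{k+ℓ})` is log-concave. -/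
theorem stmt_7 (a : ℕ → ℝ) (ℓ : ℕ) (hℓ : 1 ≤ ℓ)
    (hnonneg : ∀ k, 0 ≤ a k)
    (hlc : ∀ k, 1 ≤ k → a (k - 1) * a (k + 1) ≤ a k ^ 2)
    (hniz : ∀ i j k, i ≤ k → k ≤ j → a i ≠ 0 → a j ≠ 0 → a k ≠ 0) :
    ∀ k, 1 ≤ k →
      (∑ t ∈ Finset.range (ℓ + 1), a (k - 1 + t)) *
        (∑ t ∈ Finset.range (ℓ + 1), a (k + 1 + t)) ≤
      (∑ t ∈ Finset.range (ℓ + 1), a (k + t)) ^ 2 :=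
  stmt_7_general a ℓ hnonneg hlc hniz
end

section
/- For any finite set I of positive integers and any i ∈ I, the descent polynomial vanishes at i: d(I;i) = 0. -/
/-! Let `a = max I` and `s = I \ {a}`. For `n ≥ a`, a permutation of `[n]` whose descent set is
`I` or `s` is determined by the set of its first `a` values (`C(n, a)` choices) and by their
relative order, a permutation of `[a]` with descent set `s`; the remaining values then appear in
increasing order. Hence `d(I; n) = C(n, a) d(s; a) - d(s; n)` for all `n ≥ a`, so by induction on
`I` the descent polynomial is `(d(s; a) / a!) (n)_a - d(s; ·)`, valid down to `n = a`. The falling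
factorial vanishes at every `i < a` and `d(s; ·)` vanishes on `s`, while the value at `a` is
`d(I; a) = 0`, since `a` cannot be a descent of a permutation of `[a]`. -/

open Finset

section Descents

variable {n m : ℕ}

lemma mem_descSet_iff {π : Equiv.Perm (Fin n)} {i : ℕ} (hi0 : 0 < i) (hin : i < n) :
    i ∈ descSet n π ↔ π ⟨i, hin⟩ < π ⟨i - 1, by omega⟩ := by
  simp [descSet, hin, hi0]

lemma pos_and_lt_of_mem_descSet {π : Equiv.Perm (Fin n)} {i : ℕ} (h : i ∈ descSet n π) :
    0 < i ∧ i < n := by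
  simp only [descSet, mem_filter] at h
  exact h.2.1

lemma apply_lt_apply_succ_of_descSet_le {π : Equiv.Perm (Fin n)} (h : ∀ i ∈ descSet n π, i ≤ m)
    {k : ℕ} (hk : k + 1 < n) (hmk : m ≤ k) : π ⟨k, by omega⟩ < π ⟨k + 1, hk⟩ := by
  have hk' : k + 1 ∉ descSet n π := fun hd => by have := h _ hd; omega
  rw [mem_descSet_iff (by omega) hk, not_lt] at hk'
  exact hk'.lt_of_ne (π.injective.ne (by simp))

lemma apply_lt_apply_of_descSet_le {π : Equiv.Perm (Fin n)} (h : ∀ i ∈ descSet n π, i ≤ m)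
    {a b : Fin n} (ha : m ≤ a) (hab : a < b) : π a < π b := by
  obtain ⟨a, ha'⟩ := a
  obtain ⟨b, hb⟩ := b
  simp only [Fin.mk_lt_mk] at ha hab
  induction b, hab using Nat.le_induction with
  | base => exact apply_lt_apply_succ_of_descSet_le h hb ha
  | succ b hab ih =>
    exact (ih (by omega)).trans (apply_lt_apply_succ_of_descSet_le h hb (by omega))

lemma descSet_eq_empty_iff (π : Equiv.Perm (Fin n)) : descSet n π = ∅ ↔ π = 1 := by
  constructor
  · intro h
    have hmono : StrictMono π := fun a b hab =>
      apply_lt_apply_of_descSet_le (m := 0) (by simp [h]) (Nat.zero_le _) hab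
    have := Subsingleton.elim (hmono.orderIsoOfSurjective π π.surjective) (OrderIso.refl _)
    ext i
    exact congrArg Fin.val (DFunLike.congr_fun this i)
  · rintro rfl
    ext i
    simp only [notMem_empty, iff_false]
    intro hi
    obtain ⟨hi0, hin⟩ := pos_and_lt_of_mem_descSet hi
    rw [mem_descSet_iff hi0 hin] at hi
    simp at hi
    omega

lemma dA_empty (n : ℕ) : dA ∅ n = 1 := by
  simp [dA, descSet_eq_empty_iff, filter_eq']

lemma dA_eq_zero_of_le {I : Finset ℕ} {i : ℕ} (hi : i ∈ I) (hni : n ≤ i) : dA I n = 0 := by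
  rw [dA, card_eq_zero, filter_eq_empty_iff]
  rintro π - rfl
  have := (pos_and_lt_of_mem_descSet hi).2
  omega

end Descents

section Prefix

variable {n m : ℕ}

lemma le_of_card_eq (S : {S : Finset (Fin n) // #S = m}) : m ≤ n :=
  S.2 ▸ (card_le_univ S.1).trans_eq (Fintype.card_fin n)

lemma card_compl_of_card_eq (S : {S : Finset (Fin n) // #S = m}) : #S.1ᶜ = n - m := by
  rw [card_compl, S.2, Fintype.card_fin]

-- The first `m` positions take the values `S` in the relative order `σ`, the remaining positions
-- take the values `Sᶜ` in increasing order.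
noncomputable def permOfPrefix (S : {S : Finset (Fin n) // #S = m}) (σ : Equiv.Perm (Fin m)) :
    Equiv.Perm (Fin n) :=
  (finCongr (by have := le_of_card_eq S; omega : n = m + (n - m))).trans <|
    finSumFinEquiv.symm.trans <|
    (Equiv.sumCongr (σ.trans (S.1.orderIsoOfFin S.2).toEquiv)
      (S.1ᶜ.orderIsoOfFin (card_compl_of_card_eq S)).toEquiv).trans <|
    (Equiv.sumCongr (Equiv.refl _) (Equiv.subtypeEquivRight fun _ => mem_compl)).trans
      (Equiv.sumCompl (· ∈ S.1))

lemma permOfPrefix_apply_of_lt (S : {S : Finset (Fin n) // #S = m}) (σ : Equiv.Perm (Fin m))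
    {i : Fin n} (hi : i < m) : permOfPrefix S σ i = S.1.orderEmbOfFin S.2 (σ ⟨i, hi⟩) := by
  have : finSumFinEquiv.symm (Fin.cast (by have := le_of_card_eq S; omega) i :
      Fin (m + (n - m))) = Sum.inl ⟨i, hi⟩ := by
    rw [Equiv.symm_apply_eq]
    ext
    simp
  simp [permOfPrefix, this, coe_orderIsoOfFin_apply]

lemma permOfPrefix_apply_of_le (S : {S : Finset (Fin n) // #S = m}) (σ : Equiv.Perm (Fin m))
    {i : Fin n} (hi : m ≤ i) :
    permOfPrefix S σ i = S.1ᶜ.orderEmbOfFin (card_compl_of_card_eq S) ⟨i - m, by omega⟩ := by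
  have : finSumFinEquiv.symm (Fin.cast (by have := le_of_card_eq S; omega) i :
      Fin (m + (n - m))) = Sum.inr ⟨i - m, by omega⟩ := by
    rw [Equiv.symm_apply_eq]
    ext
    simp
    omega
  simp [permOfPrefix, this, coe_orderIsoOfFin_apply]

lemma erase_descSet_permOfPrefix (S : {S : Finset (Fin n) // #S = m}) (σ : Equiv.Perm (Fin m)) :
    (descSet n (permOfPrefix S σ)).erase m = descSet m σ := by
  ext i
  rw [mem_erase]
  constructor
  · rintro ⟨him, hi⟩
    obtain ⟨hi0, hin⟩ := pos_and_lt_of_mem_descSet hi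
    rw [mem_descSet_iff hi0 hin] at hi
    obtain hlt | hgt := him.lt_or_gt
    · rwa [permOfPrefix_apply_of_lt _ _ (show i < m from hlt),
        permOfPrefix_apply_of_lt _ _ (show i - 1 < m by omega), OrderEmbedding.lt_iff_lt,
        ← mem_descSet_iff hi0] at hi
    · rw [permOfPrefix_apply_of_le _ _ (show m ≤ i by omega),
        permOfPrefix_apply_of_le _ _ (show m ≤ i - 1 by omega), OrderEmbedding.lt_iff_lt,
        Fin.mk_lt_mk] at hi
      simp only at hi
      omega
  · intro hi
    obtain ⟨hi0, him⟩ := pos_and_lt_of_mem_descSet hi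
    have hin : i < n := him.trans_le (le_of_card_eq S)
    refine ⟨him.ne, ?_⟩
    rwa [mem_descSet_iff hi0 hin, permOfPrefix_apply_of_lt _ _ (show i < m from him),
      permOfPrefix_apply_of_lt _ _ (show i - 1 < m by omega), OrderEmbedding.lt_iff_lt,
      ← mem_descSet_iff hi0]

def prefixValues (hm : m ≤ n) (π : Equiv.Perm (Fin n)) : {S : Finset (Fin n) // #S = m} :=
  ⟨univ.map ((Fin.castLEEmb hm).trans π.toEmbedding), by simp⟩

lemma apply_castLE_mem_prefixValues (hm : m ≤ n) (π : Equiv.Perm (Fin n)) (i : Fin m) :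
    π (Fin.castLE hm i) ∈ (prefixValues hm π).1 := by
  simp [prefixValues]

noncomputable def prefixPattern (hm : m ≤ n) (π : Equiv.Perm (Fin n)) : Equiv.Perm (Fin m) :=
  Equiv.ofBijective
    (fun i => ((prefixValues hm π).1.orderIsoOfFin (prefixValues hm π).2).symm
      ⟨π (Fin.castLE hm i), apply_castLE_mem_prefixValues hm π i⟩)
    (Finite.injective_iff_bijective.mp fun i j hij => by
      simpa using (OrderIso.symm _).injective hij)

lemma orderEmbOfFin_prefixPattern (hm : m ≤ n) (π : Equiv.Perm (Fin n)) (i : Fin m) :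
    (prefixValues hm π).1.orderEmbOfFin (prefixValues hm π).2 (prefixPattern hm π i) =
      π (Fin.castLE hm i) := by
  rw [← coe_orderIsoOfFin_apply]
  simp [prefixPattern]

lemma prefixValues_permOfPrefix (S : {S : Finset (Fin n) // #S = m}) (σ : Equiv.Perm (Fin m)) :
    prefixValues (le_of_card_eq S) (permOfPrefix S σ) = S := by
  refine Subtype.ext (eq_of_subset_of_card_le (fun x hx => ?_) (by rw [S.2, (prefixValues _ _).2]))
  obtain ⟨i, -, rfl⟩ := mem_map.mp hx
  have hi : ((Fin.castLE (le_of_card_eq S) i : Fin n) : ℕ) < m := i.2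
  simp [permOfPrefix_apply_of_lt _ _ hi]

lemma prefixPattern_permOfPrefix (S : {S : Finset (Fin n) // #S = m}) (σ : Equiv.Perm (Fin m)) :
    prefixPattern (le_of_card_eq S) (permOfPrefix S σ) = σ := by
  ext i
  have hi : ((Fin.castLE (le_of_card_eq S) i : Fin n) : ℕ) < m := i.2
  have h := orderEmbOfFin_prefixPattern (le_of_card_eq S) (permOfPrefix S σ) i
  rw [prefixValues_permOfPrefix, permOfPrefix_apply_of_lt _ _ hi] at h
  exact congrArg Fin.val ((S.1.orderEmbOfFin S.2).injective h)

lemma permOfPrefix_prefixValues_prefixPattern (hm : m ≤ n) {π : Equiv.Perm (Fin n)}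
    (h : ∀ i ∈ descSet n π, i ≤ m) :
    permOfPrefix (prefixValues hm π) (prefixPattern hm π) = π := by
  ext i
  obtain hi | hi := lt_or_ge (i : ℕ) m
  · rw [permOfPrefix_apply_of_lt _ _ hi, orderEmbOfFin_prefixPattern]
    rfl
  · have hmono : StrictMono fun j : Fin (n - m) => π ⟨m + j, by omega⟩ := fun j k hjk =>
      apply_lt_apply_of_descSet_le h (by simp) (by simpa using hjk)
    have hcompl (j : Fin (n - m)) : π ⟨m + j, by omega⟩ ∈ (prefixValues hm π).1ᶜ := by
      simp [prefixValues, π.injective.eq_iff, Fin.ext_iff]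
      omega
    rw [permOfPrefix_apply_of_le _ _ hi,
      ← orderEmbOfFin_unique (card_compl_of_card_eq _) hcompl hmono]
    exact congrArg (fun j => (π j : ℕ)) (Fin.ext (by simp; omega))

end Prefix

lemma Finset.erase_eq_iff_eq_insert_or_eq {α : Type*} [DecidableEq α] {s t : Finset α} {a : α}
    (ha : a ∉ s) : t.erase a = s ↔ t = insert a s ∨ t = s := by
  constructor
  · rintro rfl
    by_cases hat : a ∈ t
    · exact .inl (insert_erase hat).symm
    · exact .inr (erase_eq_of_notMem hat).symm
  · rintro (rfl | rfl)
    · exact erase_insert ha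
    · exact erase_eq_of_notMem ha

lemma card_filter_erase_descSet_eq {n m : ℕ} {s : Finset ℕ} (hs : ∀ j ∈ s, j < m) (hm : m ≤ n) :
    #{π : Equiv.Perm (Fin n) | (descSet n π).erase m = s} = n.choose m * dA s m := by
  have hcard : n.choose m * dA s m =
      #((univ : Finset {S : Finset (Fin n) // #S = m}) ×ˢ
        univ.filter fun σ : Equiv.Perm (Fin m) => descSet m σ = s) := by
    rw [card_product, card_univ, Fintype.card_finset_len, Fintype.card_fin, dA]
  have htail (π : Equiv.Perm (Fin n)) (hπ : (descSet n π).erase m = s) :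
      ∀ i ∈ descSet n π, i ≤ m := fun i hi => by
    by_cases him : i = m
    · exact him.le
    · exact (hs i (hπ ▸ mem_erase.mpr ⟨him, hi⟩)).le
  rw [hcard]
  symm
  refine card_bij' (fun p _ => permOfPrefix p.1 p.2)
    (fun π _ => (prefixValues hm π, prefixPattern hm π)) ?_ ?_ ?_ ?_ <;>
    simp only [mem_product, mem_filter, mem_univ, true_and]
  · rintro ⟨S, σ⟩ hσ
    rw [erase_descSet_permOfPrefix, hσ]
  · intro π hπ
    rw [← erase_descSet_permOfPrefix, permOfPrefix_prefixValues_prefixPattern hm (htail π hπ), hπ]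
  · rintro ⟨S, σ⟩ -
    exact Prod.ext (prefixValues_permOfPrefix S σ) (prefixPattern_permOfPrefix S σ)
  · intro π hπ
    exact permOfPrefix_prefixValues_prefixPattern hm (htail π hπ)

lemma dA_insert_add_dA {n a : ℕ} {s : Finset ℕ} (hs : ∀ j ∈ s, j < a) (ha : a ≤ n) :
    dA (insert a s) n + dA s n = n.choose a * dA s a := by
  have has : a ∉ s := fun h => (hs a h).false
  rw [← card_filter_erase_descSet_eq hs ha, dA, dA, ← card_union_of_disjoint]
  · congr 1
    ext π
    simp [Finset.erase_eq_iff_eq_insert_or_eq has]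
  · exact disjoint_filter.mpr fun π _ h₁ h₂ => has (h₂ ▸ h₁ ▸ mem_insert_self a s)

open Polynomial

lemma sup_insert_of_forall_lt {s : Finset ℕ} {a : ℕ} (hs : ∀ j ∈ s, j < a) :
    (insert a s).sup id = a :=
  le_antisymm (Finset.sup_le (by simpa using fun j hj => (hs j hj).le))
    (le_sup (f := id) (mem_insert_self a s))

theorem exists_eval_eq_dA_and_eval_eq_zero (I : Finset ℕ) :
    ∃ p : ℚ[X], (∀ n : ℕ, I.sup id ≤ n → p.eval (n : ℚ) = dA I n) ∧
      ∀ i ∈ I, p.eval (i : ℚ) = 0 := by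
  induction I using Finset.induction_on_max with
  | empty => exact ⟨1, fun n _ => by simp [dA_empty], by simp⟩
  | insert a s hs ih =>
    obtain ⟨q, hq_eval, hq_root⟩ := ih
    have hsa : s.sup id ≤ a := Finset.sup_le fun j hj => (hs j hj).le
    set p := C ((dA s a : ℚ) / a.factorial) * descPochhammer ℚ a - q
    have hp_eval (n : ℕ) (hn : a ≤ n) : p.eval (n : ℚ) = dA (insert a s) n := by
      have hcount : (dA (insert a s) n : ℚ) + dA s n = n.choose a * dA s a := mod_cast
        dA_insert_add_dA hs hn
      simp only [p, eval_sub, eval_mul, eval_C, descPochhammer_eval_eq_descFactorial,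
        Nat.descFactorial_eq_factorial_mul_choose, Nat.cast_mul, hq_eval n (hsa.trans hn)]
      field_simp
      linear_combination -hcount
    refine ⟨p, fun n hn => hp_eval n (by rwa [sup_insert_of_forall_lt hs] at hn), ?_⟩
    intro i hi
    rcases mem_insert.mp hi with rfl | hi
    · rw [hp_eval i le_rfl, dA_eq_zero_of_le (mem_insert_self i s) le_rfl, Nat.cast_zero]
    · simp [p, descPochhammer_eval_eq_descFactorial,
        Nat.descFactorial_eq_zero_iff_lt.mpr (hs i hi), hq_root i hi]

theorem stmt_12_general (I : Finset ℕ) (p : Polynomial ℚ)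
    (hp : ∀ n : ℕ, I.sup id < n → p.eval (n : ℚ) = dA I n) :
    ∀ i ∈ I, p.eval (i : ℚ) = 0 := by
  obtain ⟨q, hq_eval, hq_root⟩ := exists_eval_eq_dA_and_eval_eq_zero I
  have hpq : p = q := by
    refine eq_of_infinite_eval_eq p q (Set.infinite_of_injective_forall_mem
      (f := fun k : ℕ => ((I.sup id + 1 + k : ℕ) : ℚ)) (fun a b hab => by simpa using hab)
      fun k => ?_)
    rw [Set.mem_ofPred_eq, hp _ (by omega), hq_eval _ (by omega)]
  intro i hi
  rw [hpq, hq_root i hi]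

/-- Theorem 4.1: every element of `I` is a root of the descent polynomial. -/
theorem stmt_12 (I : Finset ℕ) (h0 : 0 ∉ I) (p : Polynomial ℚ)
    (hp : ∀ n : ℕ, I.sup id < n → p.eval (n : ℚ) = dA I n) :
    ∀ i ∈ I, p.eval (i : ℚ) = 0 :=
  stmt_12_general I p hp
end

section
/- Let I = {m} with m ≥ 1 a positive integer. If z₀ ∈ ℂ is a root of the polynomial d(I;z) = C(z,m) − 1, then |z₀| ≤ m and Re(z₀) ≥ −1. -/
/-!
A root satisfies `∏_{j<m} |z₀ - j| = m!`. If `|z₀| > m`, then `|z₀ - j| > m - j` for every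
`j < m`, and if `Re z₀ < -1`, then `|z₀ - j| ≥ j - Re z₀ > j + 1`; either way the product would
exceed `∏_{j<m} (m - j) = ∏_{j<m} (j + 1) = m!`.
-/

open Finset Nat

lemma factorial_lt_prod_of_lt {m : ℕ} (hm : 1 ≤ m) {f : ℕ → ℝ}
    (hf : ∀ j < m, (j : ℝ) + 1 < f j) : (m ! : ℝ) < ∏ j ∈ range m, f j := by
  rw [← prod_range_add_one_eq_factorial, Nat.cast_prod]
  push_cast
  exact prod_lt_prod_of_nonempty (fun j _ => by positivity)
    (fun j hj => hf j (mem_range.mp hj)) (nonempty_range_iff.mpr (by omega))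

lemma prod_norm_sub_natCast_eq_factorial {m : ℕ} {z : ℂ}
    (hz : (∏ j ∈ range m, (z - j)) / (m ! : ℂ) - 1 = 0) :
    ∏ j ∈ range m, ‖z - j‖ = m ! := by
  rw [sub_eq_zero, div_eq_one_iff_eq (by exact_mod_cast m.factorial_ne_zero)] at hz
  rw [← norm_prod, hz, Complex.norm_natCast]

variable {m : ℕ} {z : ℂ}

lemma norm_le_of_prod_norm_sub_eq_factorial (hm : 1 ≤ m)
    (h : ∏ j ∈ range m, ‖z - j‖ = m !) : ‖z‖ ≤ m := by
  by_contra! hlt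
  refine (factorial_lt_prod_of_lt hm fun j hj => ?_).ne' (h ▸ prod_range_reflect _ m)
  have hnorm := norm_sub_norm_le z ((m - 1 - j : ℕ) : ℂ)
  rw [Complex.norm_natCast, Nat.cast_sub (by omega), Nat.cast_sub hm] at hnorm
  push_cast at hnorm ⊢
  linarith

lemma neg_one_le_re_of_prod_norm_sub_eq_factorial (hm : 1 ≤ m)
    (h : ∏ j ∈ range m, ‖z - j‖ = m !) : -1 ≤ z.re := by
  by_contra! hlt
  refine (factorial_lt_prod_of_lt hm fun j _ => ?_).ne' h
  have hre : j - z.re ≤ ‖z - j‖ := by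
    simpa using (neg_le_abs (z - j).re).trans (Complex.abs_re_le_norm (z - j))
  linarith

/-- Theorem 4.4: any root `z₀` of `d({m};z) = C(z,m) − 1` satisfies
`|z₀| ≤ m` and `Re(z₀) ≥ −1`. -/
theorem stmt_13 (m : ℕ) (hm : 1 ≤ m) (z₀ : ℂ)
    (hz : (∏ j ∈ Finset.range m, (z₀ - j)) / (m.factorial : ℂ) - 1 = 0) :
    ‖z₀‖ ≤ m ∧ -1 ≤ z₀.re := by
  have h := prod_norm_sub_natCast_eq_factorial hz
  exact ⟨norm_le_of_prod_norm_sub_eq_factorial hm h,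
    neg_one_le_re_of_prod_norm_sub_eq_factorial hm h⟩
end

section
/- Let I be a nonempty finite set of nonnegative integers with m = max(I), and let I⁻ = I \ {m}. Then for n > m, the number of signed permutations in the hyperoctahedral group B_n with descent set exactly I satisfies d_B(I;n) = C(n,m)·2^{n−m}·d_B(I⁻;m) − d_B(I⁻;n). -/
/-- A signed permutation of `[n]` is encoded as a pair `(π, ε)`: the entry in
(1-indexed) position `i` is `π_i` with sign `−` iff `ε` is true there.
`signedVal n π ε i` is that entry `β_i ∈ {±1,…,±n}` for `1 ≤ i ≤ n`, and `0`
otherwise (so in particular `β₀ = 0`). -/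
def signedVal (n : ℕ) (π : Equiv.Perm (Fin n)) (ε : Fin n → Bool) (i : ℕ) : ℤ :=
  if h : 1 ≤ i ∧ i ≤ n then
    (if ε ⟨i - 1, by omega⟩ then -(((π ⟨i - 1, by omega⟩ : ℕ) : ℤ) + 1)
     else ((π ⟨i - 1, by omega⟩ : ℕ) : ℤ) + 1)
  else 0

/-- The type `B` descent set `Des β = {i ≥ 0 : β_i > β_{i+1}} ⊆ {0,…,n−1}`,
with the convention `β₀ = 0`. -/
def descSetB (n : ℕ) (π : Equiv.Perm (Fin n)) (ε : Fin n → Bool) : Finset ℕ :=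
  (Finset.range n).filter fun i => signedVal n π ε (i + 1) < signedVal n π ε i

/-- `dB I n` is the number of signed permutations in the hyperoctahedral group
`B_n` with descent set exactly `I`. -/
def dB (I : Finset ℕ) (n : ℕ) : ℕ :=
  (Finset.univ.filter fun βε : Equiv.Perm (Fin n) × (Fin n → Bool) =>
    descSetB n βε.1 βε.2 = I).card

/-- `dD I n` is the number of elements of the type `D` Coxeter group `D_n`
(signed permutations with an even number of negative entries) with descent set
exactly `I`. -/
def dD (I : Finset ℕ) (n : ℕ) : ℕ :=
  (Finset.univ.filter fun βε : Equiv.Perm (Fin n) × (Fin n → Bool) =>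
    descSetB n βε.1 βε.2 = I ∧
      Even (Finset.univ.filter fun i => βε.2 i = true).card).card

/-!
Split a signed permutation `β ∈ B_n` after position `m`. Since `m ∈ I` and `I⁻ ⊆ [0, m)`,
`Des β` is `I` or `I⁻` exactly when `Des β \ {m} = I⁻`, i.e. when `β` has descent set `I⁻`
below `m` and an increasing tail `β_{m+1} < ⋯ < β_n`. Such a `β` is determined by the set `A`
of absolute values in its first `m` positions, the set `N ⊆ Aᶜ` of tail values carrying a
minus sign (the order of the tail is then forced), and the standardization of `β₁ ⋯ β_m` to an
element of `B_m`, which has the same descents below `m`. Hence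
`d_B(I;n) + d_B(I⁻;n) = C(n,m) 2^{n-m} d_B(I⁻;m)`.
-/

open Finset Equiv

lemma Fin.strictMono_iff_lt_add_one {α : Type*} [Preorder α] {k : ℕ} {f : Fin k → α} :
    StrictMono f ↔ ∀ (j : ℕ) (h : j + 1 < k), f ⟨j, by omega⟩ < f ⟨j + 1, h⟩ := by
  cases k with
  | zero => exact iff_of_true (fun i => i.elim0) (fun _ h => absurd h (by omega))
  | succ k =>
    rw [Fin.strictMono_iff_lt_succ]
    exact ⟨fun h j hj => h ⟨j, by omega⟩, fun h i => h i (by omega)⟩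

lemma Finset.erase_eq_erase_iff_of_mem {α : Type*} [DecidableEq α] {s t : Finset α} {a : α}
    (ha : a ∈ t) : s.erase a = t.erase a ↔ s = t ∨ s = t.erase a := by
  constructor
  · intro h
    by_cases has : a ∈ s
    · exact Or.inl (by rw [← insert_erase has, h, insert_erase ha])
    · exact Or.inr (by rwa [erase_eq_of_notMem has] at h)
  · rintro (rfl | rfl)
    · rfl
    · exact erase_idem

namespace SignedPerm

def entry (x : ℕ) (s : Bool) : ℤ := if s then -((x : ℤ) + 1) else (x : ℤ) + 1

lemma entry_neg_iff (x : ℕ) (s : Bool) : entry x s < 0 ↔ s = true := by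
  cases s <;> simp [entry] <;> omega

lemma entry_inj {x y : ℕ} {s t : Bool} (h : entry x s = entry y t) : x = y ∧ s = t := by
  cases s <;> cases t <;> simp [entry] at h ⊢ <;> omega

lemma entry_lt_entry_congr {x y x' y' : ℕ} {s t : Bool}
    (h₁ : x < y ↔ x' < y') (h₂ : y < x ↔ y' < x') :
    entry x s < entry y t ↔ entry x' s < entry y' t := by
  cases s <;> cases t <;> simp [entry] <;> omega

section Word

variable {n : ℕ} (π : Perm (Fin n)) (ε : Fin n → Bool)

/-- The one-line notation `β₁ ⋯ βₙ` of `(π, ε)`, indexed from `0`. -/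
def word (i : Fin n) : ℤ := entry (π i) (ε i)

lemma word_injective : Function.Injective (word π ε) := fun _ _ h =>
  π.injective (Fin.ext (entry_inj h).1)

lemma signedVal_zero : signedVal n π ε 0 = 0 := dif_neg (by omega)

lemma signedVal_succ {i : ℕ} (h : i < n) : signedVal n π ε (i + 1) = word π ε ⟨i, h⟩ :=
  dif_pos ⟨by omega, h⟩

lemma lt_of_mem_descSetB {i : ℕ} (h : i ∈ descSetB n π ε) : i < n :=
  mem_range.mp (mem_filter.mp h).1

lemma zero_mem_descSetB_iff (h : 0 < n) : 0 ∈ descSetB n π ε ↔ ε ⟨0, h⟩ = true := by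
  rw [descSetB, mem_filter, mem_range, signedVal_zero, signedVal_succ π ε h, word, entry_neg_iff]
  exact and_iff_right h

lemma succ_mem_descSetB_iff {i : ℕ} (h : i + 1 < n) :
    i + 1 ∈ descSetB n π ε ↔ word π ε ⟨i + 1, h⟩ < word π ε ⟨i, by omega⟩ := by
  rw [descSetB, mem_filter, mem_range, signedVal_succ π ε h, signedVal_succ π ε (by omega)]
  exact and_iff_right h

lemma descSetB_eq_iff {J : Finset ℕ} (hJ : ∀ i ∈ J, i < n) :
    descSetB n π ε = J ↔ ∀ i < n, (i ∈ descSetB n π ε ↔ i ∈ J) := by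
  refine ⟨fun h i _ => h ▸ Iff.rfl, fun h => ext fun i => ?_⟩
  by_cases hi : i < n
  · exact h i hi
  · exact iff_of_false (fun h' => hi (lt_of_mem_descSetB π ε h')) (fun h' => hi (hJ i h'))

end Word

variable {m k : ℕ}

lemma mem_descSetB_iff_of_head {π : Perm (Fin (m + k))} {ε : Fin (m + k) → Bool}
    {π' : Perm (Fin m)} {ε' : Fin m → Bool} {f : Fin m → Fin (m + k)} (hf : StrictMono f)
    (hπ : ∀ i, π (Fin.castAdd k i) = f (π' i)) (hε : ∀ i, ε (Fin.castAdd k i) = ε' i)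
    {i : ℕ} (hi : i < m) : i ∈ descSetB (m + k) π ε ↔ i ∈ descSetB m π' ε' := by
  cases i with
  | zero =>
    rw [zero_mem_descSetB_iff _ _ (by omega), zero_mem_descSetB_iff _ _ hi, ← hε]
    rfl
  | succ i =>
    have hval : ∀ a b, ((f a : ℕ) < f b ↔ (a : ℕ) < b) := fun a b => by
      rw [← Fin.lt_def, hf.lt_iff_lt, Fin.lt_def]
    rw [succ_mem_descSetB_iff _ _ (by omega), succ_mem_descSetB_iff _ _ hi]
    change word π ε (Fin.castAdd k ⟨i + 1, hi⟩) <
      word π ε (Fin.castAdd k ⟨i, by omega⟩) ↔ _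
    simp only [word, hπ, hε]
    exact entry_lt_entry_congr (hval _ _) (hval _ _)

lemma tail_strictMono_iff (π : Perm (Fin (m + k))) (ε : Fin (m + k) → Bool) :
    StrictMono (fun j : Fin k => word π ε (Fin.natAdd m j)) ↔
      ∀ i, m < i → i ∉ descSetB (m + k) π ε := by
  rw [Fin.strictMono_iff_lt_add_one]
  constructor
  · intro h i hmi hi
    obtain ⟨j, rfl⟩ := Nat.exists_eq_add_of_lt hmi
    have hj := lt_of_mem_descSetB π ε hi
    rw [succ_mem_descSetB_iff π ε hj] at hi
    exact (h j (by omega)).not_gt hi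
  · intro h j hj
    have hnd := h (m + j + 1) (by omega)
    rw [succ_mem_descSetB_iff π ε (by omega), not_lt] at hnd
    exact hnd.lt_of_ne fun he => by simpa using word_injective π ε he

lemma descSetB_erase_eq_iff {J : Finset ℕ} (hJ : ∀ i ∈ J, i < m)
    (π : Perm (Fin (m + k))) (ε : Fin (m + k) → Bool) :
    (descSetB (m + k) π ε).erase m = J ↔
      (∀ i < m, (i ∈ descSetB (m + k) π ε ↔ i ∈ J)) ∧
        StrictMono (fun j : Fin k => word π ε (Fin.natAdd m j)) := by
  rw [tail_strictMono_iff, Finset.ext_iff]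
  simp only [mem_erase]
  constructor
  · intro h
    refine ⟨fun i hi => (and_iff_right hi.ne).symm.trans (h i), fun i hmi hi => ?_⟩
    exact absurd (hJ i ((h i).mp ⟨hmi.ne', hi⟩)) (by omega)
  · rintro ⟨hhead, htail⟩ i
    rcases lt_trichotomy i m with hi | rfl | hi
    · exact (and_iff_right hi.ne).trans (hhead i hi)
    · exact iff_of_false (fun h => h.1 rfl) (fun h => (hJ _ h).false)
    · exact iff_of_false (fun h => htail i hi h.2) (fun h => by have := hJ i h; omega)

section Head

def headValues (π : Perm (Fin (m + k))) : Finset (Fin (m + k)) :=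
  univ.image fun i => π (Fin.castAdd k i)

lemma card_headValues (π : Perm (Fin (m + k))) : (headValues π).card = m :=
  (card_image_of_injective _ (π.injective.comp (Fin.castAdd_injective m k))).trans (by simp)

lemma mem_headValues_iff {π : Perm (Fin (m + k))} {a : Fin (m + k)} :
    a ∈ headValues π ↔ (π.symm a : ℕ) < m := by
  simp only [headValues, mem_image, mem_univ, true_and]
  constructor
  · rintro ⟨i, rfl⟩
    simp
  · intro h
    exact ⟨⟨π.symm a, h⟩, π.apply_symm_apply a⟩

noncomputable def standardizedHead (π : Perm (Fin (m + k))) : Perm (Fin m) :=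
  Equiv.ofBijective
    (fun i => ((headValues π).orderIsoOfFin (card_headValues π)).symm
      ⟨π (Fin.castAdd k i), mem_image_of_mem _ (mem_univ i)⟩) <|
    Finite.injective_iff_bijective.mp fun _ _ h =>
      Fin.castAdd_injective m k (π.injective (congrArg Subtype.val
        ((OrderIso.symm _).injective h)))

lemma orderEmbOfFin_standardizedHead (π : Perm (Fin (m + k))) (i : Fin m) :
    (headValues π).orderEmbOfFin (card_headValues π) (standardizedHead π i) =
      π (Fin.castAdd k i) := by
  rw [← coe_orderIsoOfFin_apply, standardizedHead, Equiv.ofBijective_apply,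
    OrderIso.apply_symm_apply]

lemma headValues_eq {π : Perm (Fin (m + k))} {A : Finset (Fin (m + k))} (hA : A.card = m)
    {π' : Perm (Fin m)} (h : ∀ i, π (Fin.castAdd k i) = A.orderEmbOfFin hA (π' i)) :
    headValues π = A := by
  refine eq_of_subset_of_card_le (fun a ha => ?_) (by rw [card_headValues, hA])
  obtain ⟨i, -, rfl⟩ := mem_image.mp ha
  exact h i ▸ orderEmbOfFin_mem A hA _

lemma standardizedHead_eq {π : Perm (Fin (m + k))} {A : Finset (Fin (m + k))}
    (hA : A.card = m) {π' : Perm (Fin m)}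
    (h : ∀ i, π (Fin.castAdd k i) = A.orderEmbOfFin hA (π' i)) :
    standardizedHead π = π' := by
  obtain rfl := headValues_eq hA h
  refine Equiv.ext fun i => ?_
  apply (orderEmbOfFin _ hA).injective
  rw [orderEmbOfFin_standardizedHead, h]

end Head

section Tail

variable {n : ℕ}

def signKey (N : Finset (Fin n)) (a : Fin n) : ℤ := entry a (decide (a ∈ N))

lemma signKey_injective (N : Finset (Fin n)) : Function.Injective (signKey N) :=
  fun _ _ h => Fin.ext (entry_inj h).1

def tailKeys (A N : Finset (Fin n)) : Finset ℤ := Aᶜ.image (signKey N)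

lemma card_tailKeys {A : Finset (Fin (m + k))} (hA : A.card = m) (N : Finset (Fin (m + k))) :
    (tailKeys A N).card = k := by
  rw [tailKeys, card_image_of_injective _ (signKey_injective N), card_compl, Fintype.card_fin,
    hA, Nat.add_sub_cancel_left]

variable {A : Finset (Fin (m + k))} (hA : A.card = m) (N : Finset (Fin (m + k)))

lemma exists_signKey_eq_orderEmbOfFin (j : Fin k) :
    ∃ a ∉ A, signKey N a = (tailKeys A N).orderEmbOfFin (card_tailKeys hA N) j := by
  obtain ⟨a, ha, h⟩ := mem_image.mp (orderEmbOfFin_mem (tailKeys A N) (card_tailKeys hA N) j)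
  exact ⟨a, mem_compl.mp ha, h⟩

/-- The values outside `A`, signed by `N` and listed in increasing signed order. -/
noncomputable def tailAt (j : Fin k) : Fin (m + k) :=
  (exists_signKey_eq_orderEmbOfFin hA N j).choose

lemma tailAt_not_mem (j : Fin k) : tailAt hA N j ∉ A :=
  (exists_signKey_eq_orderEmbOfFin hA N j).choose_spec.1

lemma signKey_tailAt (j : Fin k) :
    signKey N (tailAt hA N j) = (tailKeys A N).orderEmbOfFin (card_tailKeys hA N) j :=
  (exists_signKey_eq_orderEmbOfFin hA N j).choose_spec.2

lemma strictMono_signKey_tailAt : StrictMono (signKey N ∘ tailAt hA N) := by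
  convert ((tailKeys A N).orderEmbOfFin (card_tailKeys hA N)).strictMono using 1
  exact funext (signKey_tailAt hA N)

lemma exists_tailAt_eq {a : Fin (m + k)} (ha : a ∉ A) : ∃ j, tailAt hA N j = a := by
  have hmem : signKey N a ∈ (tailKeys A N : Set ℤ) := mem_image_of_mem _ (mem_compl.mpr ha)
  rw [← range_orderEmbOfFin _ (card_tailKeys hA N)] at hmem
  obtain ⟨j, hj⟩ := hmem
  exact ⟨j, signKey_injective N ((signKey_tailAt hA N j).trans hj)⟩

lemma tailAt_unique {g : Fin k → Fin (m + k)} (hgA : ∀ j, g j ∉ A)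
    (hg : StrictMono (signKey N ∘ g)) : g = tailAt hA N := by
  have := orderEmbOfFin_unique (card_tailKeys hA N)
    (fun j => mem_image_of_mem _ (mem_compl.mpr (hgA j))) hg
  exact funext fun j =>
    signKey_injective N ((congrFun this j).trans (signKey_tailAt hA N j).symm)

end Tail

section Merge

variable {A : Finset (Fin (m + k))} (hA : A.card = m) (N : Finset (Fin (m + k)))
  (π' : Perm (Fin m)) (ε' : Fin m → Bool)

lemma append_orderEmbOfFin_tailAt_injective :
    Function.Injective (Fin.append (fun i => A.orderEmbOfFin hA (π' i)) (tailAt hA N)) :=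
  Fin.append_injective_iff.mpr
    ⟨(A.orderEmbOfFin hA).injective.comp π'.injective,
      (strictMono_signKey_tailAt hA N).injective.of_comp,
      fun _ j h => tailAt_not_mem hA N j (h ▸ orderEmbOfFin_mem A hA _)⟩

/-- The signed permutation with standardized head `(π', ε')` on the values `A`, whose tail is
the remaining values, negative exactly on `N`, in increasing order. -/
noncomputable def merge : Perm (Fin (m + k)) × (Fin (m + k) → Bool) :=
  (Equiv.ofBijective _
      (Finite.injective_iff_bijective.mp (append_orderEmbOfFin_tailAt_injective hA N π')),
    Fin.append ε' fun j => decide (tailAt hA N j ∈ N))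

lemma merge_fst_castAdd (i : Fin m) :
    (merge hA N π' ε').1 (Fin.castAdd k i) = A.orderEmbOfFin hA (π' i) := by
  simp only [merge, Equiv.ofBijective_apply, Fin.append_left]

lemma merge_fst_natAdd (j : Fin k) : (merge hA N π' ε').1 (Fin.natAdd m j) = tailAt hA N j := by
  simp only [merge, Equiv.ofBijective_apply, Fin.append_right]

lemma merge_snd_castAdd (i : Fin m) : (merge hA N π' ε').2 (Fin.castAdd k i) = ε' i := by
  simp only [merge, Fin.append_left]

lemma merge_snd_natAdd (j : Fin k) :
    (merge hA N π' ε').2 (Fin.natAdd m j) = decide (tailAt hA N j ∈ N) := by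
  simp only [merge, Fin.append_right]

lemma word_merge_natAdd (j : Fin k) :
    word (merge hA N π' ε').1 (merge hA N π' ε').2 (Fin.natAdd m j) =
      signKey N (tailAt hA N j) := by
  rw [word, merge_fst_natAdd, merge_snd_natAdd, signKey]

end Merge

section Split

def tailNegatives (π : Perm (Fin (m + k))) (ε : Fin (m + k) → Bool) : Finset (Fin (m + k)) :=
  (headValues π)ᶜ.filter fun a => ε (π.symm a)

variable (m k) in
def headTailData : Finset (Σ _ : Finset (Fin (m + k)), Finset (Fin (m + k))) :=
  (powersetCard m univ).sigma fun A => Aᶜ.powerset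

lemma card_headTailData : (headTailData m k).card = (m + k).choose m * 2 ^ k := by
  have hfiber :
      ∀ A ∈ powersetCard m (univ : Finset (Fin (m + k))), Aᶜ.powerset.card = 2 ^ k :=
    fun A hA => by
      rw [card_powerset, card_compl, Fintype.card_fin, (mem_powersetCard.mp hA).2,
        Nat.add_sub_cancel_left]
  rw [headTailData, card_sigma, sum_congr rfl hfiber, sum_const, card_powersetCard, card_univ,
    Fintype.card_fin, smul_eq_mul]

noncomputable def split (β : Perm (Fin (m + k)) × (Fin (m + k) → Bool)) :
    (Σ _ : Finset (Fin (m + k)), Finset (Fin (m + k))) × (Perm (Fin m) × (Fin m → Bool)) :=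
  (⟨headValues β.1, tailNegatives β.1 β.2⟩,
    (standardizedHead β.1, fun i => β.2 (Fin.castAdd k i)))

lemma merge_split {π : Perm (Fin (m + k))} {ε : Fin (m + k) → Bool}
    (htail : StrictMono fun j : Fin k => word π ε (Fin.natAdd m j)) :
    merge (card_headValues π) (tailNegatives π ε) (standardizedHead π)
      (fun i => ε (Fin.castAdd k i)) = (π, ε) := by
  have hA : ∀ j, π (Fin.natAdd m j) ∉ headValues π := fun j => by simp [mem_headValues_iff]
  have hkey : ∀ j,
      signKey (tailNegatives π ε) (π (Fin.natAdd m j)) = word π ε (Fin.natAdd m j) :=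
    fun j => by simp [signKey, word, tailNegatives, hA j]
  have htailAt : tailAt (card_headValues π) (tailNegatives π ε) = fun j => π (Fin.natAdd m j) :=
    (tailAt_unique _ _ hA (by convert htail using 1; exact funext hkey)).symm
  refine Prod.ext (Equiv.ext fun x => ?_) (funext fun x => ?_)
  · induction x using Fin.addCases with
    | left i => exact (merge_fst_castAdd ..).trans (orderEmbOfFin_standardizedHead π i)
    | right j => rw [merge_fst_natAdd, htailAt]
  · induction x using Fin.addCases with
    | left i => exact merge_snd_castAdd ..
    | right j =>
      rw [merge_snd_natAdd, htailAt]
      simp [tailNegatives, hA j]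

lemma split_merge {A : Finset (Fin (m + k))} (hA : A.card = m) {N : Finset (Fin (m + k))}
    (hN : N ⊆ Aᶜ) (π' : Perm (Fin m)) (ε' : Fin m → Bool) :
    split (merge hA N π' ε') = (⟨A, N⟩, (π', ε')) := by
  have hhead := headValues_eq hA (merge_fst_castAdd hA N π' ε')
  have hneg : tailNegatives (merge hA N π' ε').1 (merge hA N π' ε').2 = N := by
    ext a
    rw [tailNegatives, mem_filter, mem_compl, hhead]
    by_cases ha : a ∈ A
    · exact iff_of_false (fun h => h.1 ha) (fun h => mem_compl.mp (hN h) ha)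
    · obtain ⟨j, rfl⟩ := exists_tailAt_eq hA N ha
      have hpos : (merge hA N π' ε').1.symm (tailAt hA N j) = Fin.natAdd m j := by
        rw [Equiv.symm_apply_eq, merge_fst_natAdd]
      rw [hpos, merge_snd_natAdd, decide_eq_true_iff]
      exact and_iff_right ha
  simp only [split, hhead, hneg, standardizedHead_eq hA (merge_fst_castAdd hA N π' ε'),
    merge_snd_castAdd]

lemma descSetB_standardizedHead {J : Finset ℕ} (hJ : ∀ i ∈ J, i < m) {π : Perm (Fin (m + k))}
    {ε : Fin (m + k) → Bool}
    (h : ∀ i < m, (i ∈ descSetB (m + k) π ε ↔ i ∈ J)) :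
    descSetB m (standardizedHead π) (fun i => ε (Fin.castAdd k i)) = J := by
  refine (descSetB_eq_iff _ _ hJ).mpr fun i hi => ?_
  rw [← mem_descSetB_iff_of_head (orderEmbOfFin _ _).strictMono
    (fun i => (orderEmbOfFin_standardizedHead π i).symm) (fun _ => rfl) hi]
  exact h i hi

lemma descSetB_merge_erase {J : Finset ℕ} (hJ : ∀ i ∈ J, i < m) {A : Finset (Fin (m + k))}
    (hA : A.card = m) (N : Finset (Fin (m + k))) {π' : Perm (Fin m)} {ε' : Fin m → Bool}
    (hdes : descSetB m π' ε' = J) :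
    (descSetB (m + k) (merge hA N π' ε').1 (merge hA N π' ε').2).erase m = J := by
  refine (descSetB_erase_eq_iff hJ _ _).mpr ⟨fun i hi => ?_, ?_⟩
  · rw [mem_descSetB_iff_of_head (orderEmbOfFin A hA).strictMono (merge_fst_castAdd hA N π' ε')
      (merge_snd_castAdd hA N π' ε') hi, hdes]
  · simp only [word_merge_natAdd]
    exact strictMono_signKey_tailAt hA N

end Split

theorem card_descSetB_erase_eq {J : Finset ℕ} (hJ : ∀ i ∈ J, i < m) :
    (univ.filter fun β : Perm (Fin (m + k)) × (Fin (m + k) → Bool) =>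
      (descSetB (m + k) β.1 β.2).erase m = J).card = (m + k).choose m * 2 ^ k * dB J m := by
  rw [← card_headTailData, dB, ← card_product]
  refine card_bij' (fun β _ => split β)
    (fun y hy => merge (mem_powersetCard.mp (mem_sigma.mp (mem_product.mp hy).1).1).2
      y.1.2 y.2.1 y.2.2) ?_ ?_ ?_ ?_
  · intro β hβ
    have hhead := ((descSetB_erase_eq_iff hJ _ _).mp (mem_filter.mp hβ).2).1
    refine mem_product.mpr ⟨mem_sigma.mpr ⟨?_, ?_⟩, mem_filter.mpr ⟨mem_univ _, ?_⟩⟩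
    · exact mem_powersetCard.mpr ⟨subset_univ _, card_headValues β.1⟩
    · exact mem_powerset.mpr (filter_subset _ _)
    · exact descSetB_standardizedHead hJ hhead
  · rintro ⟨⟨A, N⟩, π', ε'⟩ hy
    exact mem_filter.mpr ⟨mem_univ _,
      descSetB_merge_erase hJ _ N (mem_filter.mp (mem_product.mp hy).2).2⟩
  · intro β hβ
    exact merge_split ((descSetB_erase_eq_iff hJ _ _).mp (mem_filter.mp hβ).2).2
  · rintro ⟨⟨A, N⟩, π', ε'⟩ hy
    exact split_merge _ (mem_powerset.mp (mem_sigma.mp (mem_product.mp hy).1).2) π' ε'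

end SignedPerm

/-- Theorem 5.1: for nonempty `I` of nonnegative integers with max `m` and
`n > m`, `d_B(I;n) = C(n,m) 2^{n−m} d_B(I⁻;m) − d_B(I⁻;n)`. -/
theorem stmt_17 (I : Finset ℕ) (hne : I.Nonempty)
    (m : ℕ) (hm : m = I.sup id) (n : ℕ) (hn : m < n) :
    (dB I n : ℤ) =
      (n.choose m : ℤ) * 2 ^ (n - m) * dB (I.erase m) m - dB (I.erase m) n := by
  obtain ⟨k, rfl⟩ := Nat.exists_eq_add_of_le hn.le
  have hmI : m ∈ I := by
    obtain ⟨b, hb, hsup⟩ := exists_mem_eq_sup I hne id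
    exact hm ▸ hsup ▸ hb
  have hJ : ∀ i ∈ I.erase m, i < m := fun i hi =>
    lt_of_le_of_ne (hm ▸ le_sup (f := id) (mem_of_mem_erase hi)) (ne_of_mem_erase hi)
  have hdisj : Disjoint (univ.filter fun β : Perm (Fin (m + k)) × (Fin (m + k) → Bool) =>
      descSetB (m + k) β.1 β.2 = I)
      (univ.filter fun β => descSetB (m + k) β.1 β.2 = I.erase m) :=
    disjoint_filter.mpr fun _ _ h₁ h₂ => (erase_ssubset hmI).ne (h₂.symm.trans h₁)
  have hsum : dB I (m + k) + dB (I.erase m) (m + k) =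
      (m + k).choose m * 2 ^ k * dB (I.erase m) m := by
    rw [← SignedPerm.card_descSetB_erase_eq hJ, dB, dB, ← card_union_of_disjoint hdisj,
      ← filter_or]
    simp only [erase_eq_erase_iff_of_mem hmI]
  rw [Nat.add_sub_cancel_left, eq_sub_iff_add_eq]
  exact_mod_cast hsum
end

section
/- Let I be a finite set of positive integers (not containing 0) and I₀ = I ∪ {0}. Then for n > max(I), d_B(I;n) + d_B(I₀;n) = 2^n · d(I;n), where d(I;n) is the type A descent count. -/
/-!
Record a signed permutation `β` by the signs `δ` of its entries, indexed by absolute value, and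
by its standardization `std β ∈ S_n`, the permutation whose entries are in the same relative
order as those of `β`. Since `β₀ = 0` only takes part in the comparison at position `0`,
`Des β \ {0} = Des (std β)`; and `β ↦ (std β, δ)` is a bijection `B_n ≃ S_n × {±}ⁿ`, because
for fixed `δ` standardizing is composing with a fixed permutation. Hence exactly `2^n d(I;n)`
signed permutations have `Des β \ {0} = I`, and when `0 ∉ I` these are the ones with
`Des β = I` or `Des β = I ∪ {0}`.
-/

open Finset

lemma Finset.erase_eq_iff_eq_or_eq_insert {α : Type*} [DecidableEq α] {s t : Finset α} {a : α}
    (ha : a ∉ t) : s.erase a = t ↔ s = t ∨ s = insert a t := by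
  by_cases hs : a ∈ s
  · rw [erase_eq_iff_eq_insert hs ha]
    exact ⟨Or.inr, fun h => h.resolve_left fun h' => ha (h' ▸ hs)⟩
  · rw [erase_eq_of_notMem hs]
    exact ⟨Or.inl, fun h => h.resolve_right fun h' => hs (h' ▸ mem_insert_self a t)⟩

lemma Tuple.sort_symm_lt_sort_symm_iff {n : ℕ} {α : Type*} [LinearOrder α] {f : Fin n → α}
    (hf : Function.Injective f) {v w : Fin n} :
    (Tuple.sort f).symm v < (Tuple.sort f).symm w ↔ f v < f w := by
  have hmono : StrictMono (f ∘ Tuple.sort f) :=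
    (Tuple.monotone_sort f).strictMono_of_injective (hf.comp (Equiv.injective _))
  conv_rhs => rw [← (Tuple.sort f).apply_symm_apply v, ← (Tuple.sort f).apply_symm_apply w]
  exact hmono.lt_iff_lt.symm

namespace SignedPerm

variable {n : ℕ}

def signedEntry (δ : Fin n → Bool) (v : Fin n) : ℤ :=
  if δ v then -((v : ℤ) + 1) else (v : ℤ) + 1

lemma signedEntry_injective (δ : Fin n → Bool) : Function.Injective (signedEntry δ) := by
  intro v w h
  unfold signedEntry at h
  ext
  split_ifs at h <;> omega

lemma signedVal_eq_signedEntry (π : Equiv.Perm (Fin n)) (ε : Fin n → Bool) {i : ℕ}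
    (h1 : 1 ≤ i) (h2 : i ≤ n) :
    signedVal n π ε i = signedEntry (ε ∘ π.symm) (π ⟨i - 1, by omega⟩) := by
  simp [signedVal, signedEntry, h1, h2]

/-- `v ↦` the rank of `signedEntry δ v` among all the signed entries. -/
noncomputable def rank (δ : Fin n → Bool) : Equiv.Perm (Fin n) :=
  (Tuple.sort (signedEntry δ)).symm

lemma rank_lt_rank_iff (δ : Fin n → Bool) {v w : Fin n} :
    rank δ v < rank δ w ↔ signedEntry δ v < signedEntry δ w :=
  Tuple.sort_symm_lt_sort_symm_iff (signedEntry_injective δ)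

noncomputable def std (π : Equiv.Perm (Fin n)) (ε : Fin n → Bool) : Equiv.Perm (Fin n) :=
  π.trans (rank (ε ∘ π.symm))

lemma descSetB_erase_zero (π : Equiv.Perm (Fin n)) (ε : Fin n → Bool) :
    (descSetB n π ε).erase 0 = descSet n (std π ε) := by
  ext i
  simp only [descSetB, descSet, mem_erase, mem_filter, mem_range]
  constructor
  · rintro ⟨hi0, hin, hlt⟩
    refine ⟨hin, ⟨Nat.pos_of_ne_zero hi0, hin⟩, ?_⟩
    rw [signedVal_eq_signedEntry π ε (by omega) (by omega),
      signedVal_eq_signedEntry π ε (by omega) (by omega)] at hlt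
    exact (rank_lt_rank_iff _).mpr hlt
  · rintro ⟨hin, ⟨hi0, _⟩, hlt⟩
    refine ⟨by omega, hin, ?_⟩
    rw [signedVal_eq_signedEntry π ε (by omega) (by omega),
      signedVal_eq_signedEntry π ε (by omega) (by omega)]
    exact (rank_lt_rank_iff _).mp hlt

/-- `(π, ε) ↦ (std π ε, ε ∘ π⁻¹)`. -/
noncomputable def stdEquiv :
    Equiv.Perm (Fin n) × (Fin n → Bool) ≃ Equiv.Perm (Fin n) × (Fin n → Bool) :=
  (Equiv.prodCongrRight fun π => π.arrowCongr (Equiv.refl Bool)).trans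
    (Equiv.prodCongrLeft fun δ => Equiv.mulLeft (rank δ))

lemma stdEquiv_apply_fst (p : Equiv.Perm (Fin n) × (Fin n → Bool)) :
    (stdEquiv p).1 = std p.1 p.2 := rfl

lemma card_descSetB_erase_zero_eq (I : Finset ℕ) :
    #{p : Equiv.Perm (Fin n) × (Fin n → Bool) | (descSetB n p.1 p.2).erase 0 = I}
      = 2 ^ n * dA I n := by
  rw [card_equiv stdEquiv (t := {q | descSet n q.1 = I}) (by
    simp [stdEquiv_apply_fst, descSetB_erase_zero]),
    show ({q | descSet n q.1 = I} : Finset (Equiv.Perm (Fin n) × (Fin n → Bool)))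
      = ({σ | descSet n σ = I} : Finset _) ×ˢ (univ : Finset (Fin n → Bool)) by ext; simp]
  simp [dA, mul_comm]

end SignedPerm

theorem stmt_18_general (I : Finset ℕ) (h0 : 0 ∉ I) (n : ℕ) :
    dB I n + dB (insert 0 I) n = 2 ^ n * dA I n := by
  have hdisj : ∀ s : Finset ℕ, s = I → s ≠ insert 0 I := fun _ hI hI0 =>
    insert_ne_self.mpr h0 (hI0.symm.trans hI)
  rw [dB, dB, ← card_union_of_disjoint (disjoint_filter.mpr fun _ _ => hdisj _), ← filter_or]
  simp_rw [← erase_eq_iff_eq_or_eq_insert h0]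
  exact SignedPerm.card_descSetB_erase_zero_eq I

/-- Corollary 5.3: `d_B(I;n) + d_B(I ∪ {0};n) = 2^n d(I;n)` for a set `I` of
positive integers. -/
theorem stmt_18 (I : Finset ℕ) (h0 : 0 ∉ I) (n : ℕ) (hn : I.sup id < n) :
    dB I n + dB (insert 0 I) n = 2 ^ n * dA I n :=
  stmt_18_general I h0 n
end
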